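/- arXiv:2403.19693 — 11 statements merged into one kernel-verified Lean document; each statement's English description precedes it below -/
import Mathlib

section
/- For all x in (0, π/2], it holds that 2/π + (2/π²)(π − 2x) ≥ sin(x)/x ≥ 2/π + ((π − 2)/π²)(π − 2x). -/
/-!
Both bounds say that a function `f` vanishing at `0` and `π/2` is nonnegative on `[0, π/2]`:
`sin x - x + 2(π-2)/π² x²` for the lower bound, and, after substituting `x = π/2 - t`,
`1 - 4t²/π² - cos t` for the upper one. In each case `f'(0) = 0` and `f''` changes sign
once, from `+` to `-`, so `f` increases while convex and is concave afterwards; a concave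
function lies above the smaller of its endpoint values.
-/

open Real Set

theorem nonneg_on_Icc_of_deriv2_nonneg_then_nonpos {f f' f'' : ℝ → ℝ} {u c v : ℝ}
    (huc : u ≤ c) (hcv : c ≤ v)
    (hf : ∀ x ∈ Icc u v, HasDerivAt f (f' x) x)
    (hf' : ∀ x ∈ Icc u v, HasDerivAt f' (f'' x) x)
    (hfu : 0 ≤ f u) (hf'u : 0 ≤ f' u) (hfv : 0 ≤ f v)
    (h_nonneg : ∀ x ∈ Icc u c, 0 ≤ f'' x) (h_nonpos : ∀ x ∈ Icc c v, f'' x ≤ 0) :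
    ∀ x ∈ Icc u v, 0 ≤ f x := by
  have hleft : Icc u c ⊆ Icc u v := Icc_subset_Icc_right hcv
  have hright : Icc c v ⊆ Icc u v := Icc_subset_Icc_left huc
  have hderiv {g g' : ℝ → ℝ} {s : Set ℝ} (hs : s ⊆ Icc u v)
      (hg : ∀ x ∈ Icc u v, HasDerivAt g (g' x) x) :
      ∀ x ∈ interior s, HasDerivWithinAt g (g' x) (interior s) x :=
    fun x hx => (hg x (hs (interior_subset hx))).hasDerivWithinAt
  have hcont {g g' : ℝ → ℝ} {s : Set ℝ} (hs : s ⊆ Icc u v)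
      (hg : ∀ x ∈ Icc u v, HasDerivAt g (g' x) x) : ContinuousOn g s :=
    fun x hx => (hg x (hs hx)).continuousAt.continuousWithinAt
  have hf'_mono : MonotoneOn f' (Icc u c) :=
    monotoneOn_of_hasDerivWithinAt_nonneg (convex_Icc u c) (hcont hleft hf') (hderiv hleft hf')
      fun x hx => h_nonneg x (interior_subset hx)
  have hf_mono : MonotoneOn f (Icc u c) :=
    monotoneOn_of_hasDerivWithinAt_nonneg (convex_Icc u c) (hcont hleft hf) (hderiv hleft hf)
      fun x hx => hf'u.trans <|
        hf'_mono (left_mem_Icc.2 huc) (interior_subset hx) (interior_subset hx).1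
  have hf_left : ∀ x ∈ Icc u c, 0 ≤ f x :=
    fun x hx => hfu.trans (hf_mono (left_mem_Icc.2 huc) hx hx.1)
  have hf_concave : ConcaveOn ℝ (Icc c v) f :=
    concaveOn_of_hasDerivWithinAt2_nonpos (convex_Icc c v) (hcont hright hf)
      (hderiv hright hf) (hderiv hright hf') fun x hx => h_nonpos x (interior_subset hx)
  intro x hx
  rcases le_total x c with hxc | hcx
  · exact hf_left x ⟨hx.1, hxc⟩
  · exact (le_min (hf_left c (right_mem_Icc.2 huc)) hfv).trans
      (hf_concave.min_le_of_mem_Icc (left_mem_Icc.2 hcv) (right_mem_Icc.2 hcv) ⟨hcx, hx.2⟩)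

theorem sub_mul_sq_le_sin {x : ℝ} (hx : x ∈ Icc 0 (π / 2)) :
    x - 2 * (π - 2) / π ^ 2 * x ^ 2 ≤ sin x := by
  set k : ℝ := 4 * (π - 2) / π ^ 2
  have hk0 : 0 ≤ k := div_nonneg (by linarith [pi_gt_three]) (by positivity)
  have hk1 : k ≤ 1 := by
    rw [div_le_one (by positivity)]
    nlinarith [sq_nonneg (π - 2)]
  have hsin_arcsin : sin (arcsin k) = k := sin_arcsin (by linarith) hk1
  have key := nonneg_on_Icc_of_deriv2_nonneg_then_nonpos (f := fun x => sin x - x + k / 2 * x ^ 2)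
    (f' := fun x => cos x - 1 + k * x) (f'' := fun x => k - sin x)
    (arcsin_nonneg.2 hk0) (arcsin_le_pi_div_two k)
    (fun x _ => by
      refine (((hasDerivAt_sin x).sub (hasDerivAt_id x)).add
        (((hasDerivAt_id x).pow 2).const_mul (k / 2))).congr_deriv ?_
      simp only [id, Nat.cast_ofNat]
      ring)
    (fun x _ => by
      refine (((hasDerivAt_cos x).sub_const 1).add
        ((hasDerivAt_id x).const_mul k)).congr_deriv ?_
      ring)
    (by simp) (by simp)
    (le_of_eq (by
      simp only [sin_pi_div_two, k]
      field_simp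
      ring))
    (fun y hy => by
      simpa [hsin_arcsin] using sin_le_sin_of_le_of_le_pi_div_two
        (by linarith [hy.1, pi_pos]) (arcsin_le_pi_div_two k) hy.2)
    (fun y hy => by
      simpa [hsin_arcsin] using sin_le_sin_of_le_of_le_pi_div_two
        (neg_pi_div_two_le_arcsin k) hy.2 hy.1)
    x hx
  have hk : k / 2 = 2 * (π - 2) / π ^ 2 := by ring
  simp only [hk] at key
  linarith

theorem cos_le_one_sub_mul_sq {t : ℝ} (ht : t ∈ Icc 0 (π / 2)) :
    cos t ≤ 1 - 4 / π ^ 2 * t ^ 2 := by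
  set m : ℝ := 8 / π ^ 2
  have hm0 : 0 ≤ m := by positivity
  have hm1 : m ≤ 1 := by
    rw [div_le_one (by positivity)]
    nlinarith [pi_gt_three]
  have hcos_arccos : cos (arccos m) = m := cos_arccos (by linarith) hm1
  have key := nonneg_on_Icc_of_deriv2_nonneg_then_nonpos
    (f := fun t => 1 - 4 / π ^ 2 * t ^ 2 - cos t)
    (f' := fun t => sin t - m * t) (f'' := fun t => cos t - m)
    (arccos_nonneg m) (arccos_le_pi_div_two.2 hm0)
    (fun t _ => by
      refine ((((hasDerivAt_id t).pow 2).const_mul (4 / π ^ 2)).const_sub 1).sub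
        (hasDerivAt_cos t) |>.congr_deriv ?_
      simp only [id, Nat.cast_ofNat, m]
      ring)
    (fun t _ => by
      refine (hasDerivAt_sin t).sub ((hasDerivAt_id t).const_mul m) |>.congr_deriv ?_
      ring)
    (by simp) (by simp)
    (le_of_eq (by
      simp only [cos_pi_div_two]
      field_simp
      ring))
    (fun y hy => by
      simpa [hcos_arccos] using cos_le_cos_of_nonneg_of_le_pi hy.1
        (arccos_le_pi m) hy.2)
    (fun y hy => by
      simpa [hcos_arccos] using cos_le_cos_of_nonneg_of_le_pi (arccos_nonneg m)
        (by linarith [hy.2, pi_pos]) hy.1)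
    t ht
  linarith

theorem qi_guo (x : ℝ) (hx : x ∈ Set.Ioc 0 (π/2)) :
    2/π + (π - 2)/π^2 * (π - 2*x) ≤ Real.sin x / x ∧
    Real.sin x / x ≤ 2/π + 2/π^2 * (π - 2*x) := by
  have hx0 : 0 < x := hx.1
  have hlower := sub_mul_sq_le_sin ⟨hx0.le, hx.2⟩
  have hupper := cos_le_one_sub_mul_sq (t := π / 2 - x) ⟨by linarith [hx.2], by linarith⟩
  rw [cos_pi_div_two_sub] at hupper
  constructor
  · rw [le_div_iff₀ hx0]
    calc (2/π + (π - 2)/π^2 * (π - 2*x)) * x = x - 2 * (π - 2) / π ^ 2 * x ^ 2 := by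
          field_simp; ring
      _ ≤ sin x := hlower
  · rw [div_le_iff₀ hx0]
    calc sin x ≤ 1 - 4 / π ^ 2 * (π / 2 - x) ^ 2 := hupper
      _ = (2/π + 2/π^2 * (π - 2*x)) * x := by field_simp; ring
end

section
/- For all x in (0, π/2], it holds that 2/π + (1/π³)(π² − 4x²) ≤ sin(x)/x ≤ 2/π + ((π − 2)/π³)(π² − 4x²). -/
/-!
On `[0, 1]` compare `sin x` with its Taylor polynomials at `0`,
`x - x³/6 ≤ sin x ≤ x - x³/6 + x⁵/100`; on `[1, π/2]` write `sin x = cos y` with `y = π/2 - x`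
and use `1 - y²/2 ≤ cos y ≤ 1 - y²/2 + 5y⁴/96`. After clearing denominators each of the four
cases is a polynomial inequality in `x` and `π`, which `3.1415 < π < 3.1416` settles.
-/

open Real

namespace Real

lemma pi_pow_bounds :
    3.1415 < π ∧ π < 3.1416 ∧ 9.869 < π ^ 2 ∧ π ^ 2 < 9.87 ∧ 31.003 < π ^ 3 ∧ π ^ 3 < 31.01 := by
  have h₁ := pi_gt_d4
  have h₂ := pi_lt_d4
  have h₃ : 9.869 < π ^ 2 := by nlinarith
  have h₄ : π ^ 2 < 9.87 := by nlinarith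
  refine ⟨h₁, h₂, h₃, h₄, ?_, ?_⟩ <;> rw [pow_succ] <;> nlinarith

lemma sin_le_sub_cube_add_pow_five {x : ℝ} (hx₀ : 0 ≤ x) (hx₁ : x ≤ 1) :
    sin x ≤ x - x ^ 3 / 6 + x ^ 5 / 100 := by
  have h := le_of_abs_le (sin_bound (x := x) (by rwa [abs_of_nonneg hx₀]))
  rw [abs_of_nonneg hx₀] at h
  linarith

lemma cos_le_one_sub_sq_add_pow_four {x : ℝ} (hx : |x| ≤ 1) :
    cos x ≤ 1 - x ^ 2 / 2 + x ^ 4 * (5 / 96) := by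
  have h := le_of_abs_le (cos_bound hx)
  rw [pow_abs, abs_of_nonneg (by positivity)] at h
  linarith

end Real

section QiQuadratic

variable {x : ℝ}

lemma qi_lower_of_le_one (hx₀ : 0 ≤ x) (hx₁ : x ≤ 1) :
    x * (3 * π ^ 2 - 4 * x ^ 2) ≤ π ^ 3 * sin x := by
  obtain ⟨hπ₁, hπ₂, hπ₃, hπ₄, hπ₅, hπ₆⟩ := pi_pow_bounds
  have hs := mul_le_mul_of_nonneg_left (sin_ge_sub_cube hx₀) (pow_pos pi_pos 3).le
  have hx₃ : x ^ 3 ≤ x := pow_le_of_le_one hx₀ hx₁ (by norm_num)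
  have hc : π ^ 3 / 6 - 4 ≤ π ^ 3 - 3 * π ^ 2 := by linarith
  nlinarith [mul_le_mul hx₃ hc (by linarith) hx₀]

lemma qi_lower_of_one_le (hx₁ : 1 ≤ x) :
    x * (3 * π ^ 2 - 4 * x ^ 2) ≤ π ^ 3 * sin x := by
  obtain ⟨hπ₁, hπ₂, hπ₃, hπ₄, hπ₅, hπ₆⟩ := pi_pow_bounds
  have hc := one_sub_sq_div_two_le_cos (x := π / 2 - x)
  rw [cos_pi_div_two_sub] at hc
  have hfactor : 0 ≤ 6 * π - π ^ 3 / 2 - 4 * (π / 2 - x) := by linarith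
  nlinarith [mul_nonneg (sq_nonneg (π / 2 - x)) hfactor]

lemma qi_upper_of_le_one (hx₀ : 0 ≤ x) (hx₁ : x ≤ 1) :
    π ^ 3 * sin x ≤ x * (π ^ 3 - 4 * (π - 2) * x ^ 2) := by
  obtain ⟨hπ₁, hπ₂, hπ₃, hπ₄, hπ₅, hπ₆⟩ := pi_pow_bounds
  have hs := mul_le_mul_of_nonneg_left (sin_le_sub_cube_add_pow_five hx₀ hx₁) (pow_pos pi_pos 3).le
  have hx₅ : x ^ 5 ≤ x ^ 3 := pow_le_pow_of_le_one hx₀ hx₁ (by norm_num)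
  have hc : π ^ 3 / 100 ≤ π ^ 3 / 6 - 4 * (π - 2) := by linarith
  nlinarith [mul_le_mul hx₅ hc (by positivity) (by positivity)]

lemma qi_upper_of_one_le (hx₁ : 1 ≤ x) (hx : x ≤ π / 2) :
    π ^ 3 * sin x ≤ x * (π ^ 3 - 4 * (π - 2) * x ^ 2) := by
  obtain ⟨hπ₁, hπ₂, hπ₃, hπ₄, hπ₅, hπ₆⟩ := pi_pow_bounds
  obtain ⟨y, rfl⟩ : ∃ y, x = π / 2 - y := ⟨π / 2 - x, by ring⟩
  have hy₀ : 0 ≤ y := by linarith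
  have hy₁ : y ≤ 0.571 := by linarith
  have hc := cos_le_one_sub_sq_add_pow_four (x := y) (by rw [abs_of_nonneg hy₀]; linarith)
  rw [sin_pi_div_two_sub]
  have hy₃ : π ^ 3 * y ^ 3 ≤ 31.01 * 0.571 * y ^ 2 := by
    nlinarith [mul_le_mul hπ₆.le hy₁ hy₀ (by positivity), sq_nonneg y]
  -- the two sides differ by `y` times this cubic, positive for `0 ≤ y ≤ π / 2 - 1`
  have key : 0 ≤ 2 * π ^ 2 * (π - 3) + (12 * π - 6 * π ^ 2 + π ^ 3 / 2) * y + 4 * (π - 2) * y ^ 2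
      - 5 / 96 * π ^ 3 * y ^ 3 := by
    nlinarith [sq_nonneg (y - 3 / 4)]
  nlinarith [mul_nonneg hy₀ key]

end QiQuadratic

theorem qi_quadratic (x : ℝ) (hx : x ∈ Set.Ioc 0 (π/2)) :
    2/π + 1/π^3 * (π^2 - 4*x^2) ≤ Real.sin x / x ∧
    Real.sin x / x ≤ 2/π + (π - 2)/π^3 * (π^2 - 4*x^2) := by
  obtain ⟨hx₀, hxπ⟩ := hx
  have hπ₃ : 0 < π ^ 3 := pow_pos pi_pos 3
  have hlower : 2/π + 1/π^3 * (π^2 - 4*x^2) = (3 * π ^ 2 - 4 * x ^ 2) / π ^ 3 := by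
    field_simp; ring
  have hupper : 2/π + (π - 2)/π^3 * (π^2 - 4*x^2) = (π ^ 3 - 4 * (π - 2) * x ^ 2) / π ^ 3 := by
    field_simp; ring
  rw [hlower, hupper, div_le_div_iff₀ hπ₃ hx₀, div_le_div_iff₀ hx₀ hπ₃]
  rcases le_total x 1 with hx₁ | hx₁
  · exact ⟨by linarith [qi_lower_of_le_one hx₀.le hx₁], by linarith [qi_upper_of_le_one hx₀.le hx₁]⟩
  · exact ⟨by linarith [qi_lower_of_one_le hx₁], by linarith [qi_upper_of_one_le hx₁ hxπ]⟩
end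

section
/- For all x in (0, π/2], it holds that 2/π + (2/(3π⁴))(π³ − 8x³) ≤ sin(x)/x ≤ 2/π + ((π − 2)/π⁴)(π³ − 8x³). -/
open Real

set_option maxHeartbeats 1000000 in
theorem deng_cubic (x : ℝ) (hx : x ∈ Set.Ioc 0 (π/2)) :
    2/π + 2/(3*π^4) * (π^3 - 8*x^3) ≤ Real.sin x / x ∧
    Real.sin x / x ≤ 2/π + (π - 2)/π^4 * (π^3 - 8*x^3) := by
  obtain ⟨hx0, hx2⟩ := hx
  have hπ : (0:ℝ) < π := Real.pi_pos
  have hπl : (3141592/1000000 : ℝ) < π := by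
    have := Real.pi_gt_d6; norm_num at this ⊢; linarith
  have hπu : π < 3141593/1000000 := by
    have := Real.pi_lt_d6; norm_num at this ⊢; linarith
  have hp2l : (98696/10000 : ℝ) < π^2 := by nlinarith
  have hp2u : π^2 < 98697/10000 := by nlinarith
  have hp3l : (310060/10000 : ℝ) < π^3 := by nlinarith
  have hp3u : π^3 < 310064/10000 := by nlinarith
  have hp4l : (974090/10000 : ℝ) < π^4 := by nlinarith
  have hp4u : π^4 < 974100/10000 := by nlinarith
  constructor
  · -- lower bound
    have key : (8*π^3 - 16*x^3) * x ≤ 3*π^4 * Real.sin x := by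
      by_cases hc : x ≤ 4/5
      · have hb := Real.sin_bound (x := x) (by rw [abs_of_pos hx0]; linarith)
        rw [abs_of_pos hx0] at hb
        have h1 : x - x^3/6 - x^4 * (5/96) ≤ Real.sin x := by
          have := (abs_le.mp hb).1; nlinarith [mul_le_mul_of_nonneg_left (show x ≤ 1 by linarith) (pow_pos hx0 4).le]
        nlinarith [pow_pos hx0 2, pow_pos hx0 3, pow_pos hx0 4,
          mul_pos (mul_pos hx0 hx0) hπ,
          mul_nonneg (mul_nonneg hx0.le hx0.le) hx0.le]
      · push_neg at hc
        set t := π/2 - x with ht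
        have hx' : x = π/2 - t := by simp only [ht]; ring
        clear_value t
        have ht0 : 0 ≤ t := by simp only [ht]; linarith
        have ht1 : t ≤ 771/1000 := by simp only [ht]; linarith
        have hs : Real.sin x = Real.cos t := by rw [ht]; exact (Real.cos_pi_div_two_sub x).symm
        have hb := Real.cos_bound (x := t) (by rw [abs_of_nonneg ht0]; linarith)
        rw [abs_of_nonneg ht0] at hb
        have h1 : 1 - t^2/2 - t^4 * (5/96) ≤ Real.cos t := by
          have := (abs_le.mp hb).1; linarith
        have hpt : π * t ≤ 243/100 :=
          le_trans (mul_le_mul hπu.le ht1 ht0 (by norm_num)) (by norm_num)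
        have h16 : (0:ℝ) ≤ (16 - 5*π^4/32) * t^2 :=
          mul_nonneg (by nlinarith) (sq_nonneg t)
        have hbr : (0:ℝ) ≤ (24*π^2 - 3*π^4/2) - 32*(π*t) + (16 - 5*π^4/32)*t^2 := by
          nlinarith [h16, hpt, hp2l, hp4u]
        rw [hs, hx']
        nlinarith [mul_nonneg (sq_nonneg t) hbr]
    have e : 2/π + 2/(3*π^4) * (π^3 - 8*x^3) = ((8*π^3 - 16*x^3) * x) / (3*π^4*x) := by
      field_simp
      ring
    rw [e, div_le_iff₀ (by positivity), div_mul_eq_mul_div]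
    have e2 : Real.sin x * (3*π^4*x) / x = 3*π^4 * Real.sin x := by
      field_simp
    rw [e2]; exact key
  · -- upper bound
    have key : π^4 * Real.sin x ≤ π^4 * x - 8*(π-2)*x^4 := by
      by_cases hc : x ≤ 1
      · have hb := Real.sin_bound (x := x) (by rw [abs_of_pos hx0]; linarith)
        rw [abs_of_pos hx0] at hb
        have h1 : Real.sin x ≤ x - x^3/6 + x^4 * (5/96) := by
          have := (abs_le.mp hb).2
          have h5 : x^5/100 ≤ x^4*(5/96) := by
            have h6 := mul_le_mul_of_nonneg_left (show x ≤ 1 by linarith) (pow_pos hx0 4).le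
            have e5 : x^5 = x^4*x := by ring
            rw [e5]; nlinarith [pow_pos hx0 4]
          linarith
        nlinarith [pow_pos hx0 3, pow_pos hx0 4,
          mul_nonneg (mul_nonneg (mul_nonneg hx0.le hx0.le) hx0.le) (sub_nonneg.mpr hc)]
      · push_neg at hc
        set t := π/2 - x with ht
        have hx' : x = π/2 - t := by simp only [ht]; ring
        clear_value t
        have ht0 : 0 ≤ t := by simp only [ht]; linarith
        have ht1 : t ≤ 571/1000 := by simp only [ht]; linarith
        have hs : Real.sin x = Real.cos t := by rw [ht]; exact (Real.cos_pi_div_two_sub x).symm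
        have hb := Real.cos_bound (x := t) (by rw [abs_of_nonneg ht0]; linarith)
        rw [abs_of_nonneg ht0] at hb
        have h1 : Real.cos t ≤ 1 - t^2/2 + t^4 * (5/96) := by
          have := (abs_le.mp hb).2; linarith
        have ht2 : (0:ℝ) ≤ t^2 := sq_nonneg t
        have ht3 : (0:ℝ) ≤ t^3 := by positivity
        -- rational coefficient bounds times powers of t
        have d0 : (4417/100 : ℝ) ≤ 3*π^4 - 8*π^3 := by nlinarith
        have d1 : (0:ℝ) ≤ ((π^4/2 - 12*π^3 + 24*π^2) + 8651/100) * t := by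
          apply mul_nonneg _ ht0; nlinarith
        have d2 : (0:ℝ) ≤ ((16*π^2 - 32*π) - 5738/100) * t^2 := by
          apply mul_nonneg _ ht2; nlinarith
        have d3 : (0:ℝ) ≤ (1421/100 - (8*π - 16 + 5*π^4/96)) * t^3 := by
          apply mul_nonneg _ ht3; nlinarith
        have hq : (0:ℝ) ≤ 4417/100 - (8651/100)*t + (5738/100)*t^2 - (1421/100)*t^3 := by
          nlinarith [sq_nonneg (t - 571/1000), mul_nonneg (sq_nonneg (t - 571/1000)) ht0,
            mul_nonneg (sub_nonneg.mpr ht1) ht0, mul_nonneg (mul_nonneg ht0 ht0) ht0]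
        have hbr : (0:ℝ) ≤ (3*π^4 - 8*π^3) + (π^4/2 - 12*π^3 + 24*π^2)*t
            + (16*π^2 - 32*π)*t^2 - (8*π - 16 + 5*π^4/96)*t^3 := by
          nlinarith [d0, d1, d2, d3, hq]
        rw [hs, hx']
        nlinarith [mul_nonneg ht0 hbr]
    have e : 2/π + (π - 2)/π^4 * (π^3 - 8*x^3) = (π^4 * x - 8*(π-2)*x^4) / (π^4*x) := by
      field_simp
      ring
    rw [e, le_div_iff₀ (by positivity)]
    have e2 : Real.sin x / x * (π^4*x) = π^4 * Real.sin x := by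
      field_simp
    rw [e2]; exact key
end

section
/- For all x in (0, π/2], it holds that 2/π + (1/(2π⁵))(π⁴ − 16x⁴) ≤ sin(x)/x ≤ 2/π + ((π − 2)/π⁵)(π⁴ − 16x⁴). -/
/-! With `x = π t / 2` the two bounds read
`t (5 - t⁴) / 4 ≤ sin (π t / 2) ≤ t + (π - 2) / 2 · (t - t⁵)` for `t ∈ [0, 1]`.
Away from `t = 1` both follow from the Taylor bounds `x - x³/6 ≤ sin x ≤ x - x³/6 + x⁵/120`.
Near `t = 1`, where both bounds meet `sin`, we expand around `π / 2` instead: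
`sin x = cos (π/2 - x) ≥ 1 - (π/2 - x)² / 2` gives the lower bound and `sin x ≤ 1` the upper one.
The numerical input is only `3 < π < 3.15`. -/

open Real

lemma cos_le_one_sub_sq_div_two_add_pow_four (x : ℝ) : cos x ≤ 1 - x ^ 2 / 2 + x ^ 4 / 24 := by
  wlog hx : 0 ≤ x
  · simpa [Even.neg_pow (by decide : Even 4)] using this (-x) (by linarith)
  let f (t : ℝ) : ℝ := 1 - t ^ 2 / 2 + t ^ 4 / 24 - cos t
  have hderiv (t : ℝ) : deriv f t = sin t - (t - t ^ 3 / 6) := by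
    simp (disch := fun_prop) [f]
    ring
  have hmono : MonotoneOn f (Set.Ici 0) := by
    apply monotoneOn_of_deriv_nonneg (convex_Ici 0) (by fun_prop) (by fun_prop)
    grind [sin_ge_sub_cube, interior_Ici]
  have h0 : f 0 ≤ f x := hmono (by simp) hx hx
  grind [cos_zero]

lemma sin_le_sub_cube_add_pow_five {x : ℝ} (hx : 0 ≤ x) :
    sin x ≤ x - x ^ 3 / 6 + x ^ 5 / 120 := by
  let f (t : ℝ) : ℝ := t - t ^ 3 / 6 + t ^ 5 / 120 - sin t
  have hderiv (t : ℝ) : deriv f t = 1 - t ^ 2 / 2 + t ^ 4 / 24 - cos t := by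
    simp (disch := fun_prop) [f]
    ring
  have hmono : MonotoneOn f (Set.Ici 0) := by
    apply monotoneOn_of_deriv_nonneg (convex_Ici 0) (by fun_prop) (by fun_prop)
    grind [cos_le_one_sub_sq_div_two_add_pow_four]
  have h0 : f 0 ≤ f x := hmono (by simp) hx hx
  grind [sin_zero]

lemma sin_pi_div_two_mul_lower_of_le_half {t : ℝ} (ht0 : 0 ≤ t) (ht : t ≤ 1 / 2) :
    t * (5 - t ^ 4) / 4 ≤ sin (π / 2 * t) := by
  have hπ : π ^ 3 < 32 := by nlinarith [pow_lt_pow_left₀ pi_lt_d2 pi_pos.le (by norm_num : 3 ≠ 0)]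
  calc t * (5 - t ^ 4) / 4 ≤ 5 / 4 * t := by nlinarith [mul_nonneg ht0 (pow_nonneg ht0 4)]
    _ ≤ π / 2 * t - (π / 2 * t) ^ 3 / 6 := by
        nlinarith [pi_gt_three, mul_nonneg ht0 (mul_nonneg ht0 ht0),
          mul_le_mul_of_nonneg_left ht (mul_nonneg ht0 ht0)]
    _ ≤ sin (π / 2 * t) := sin_ge_sub_cube (by positivity)

lemma sin_pi_div_two_mul_lower_of_half_le {t : ℝ} (ht : 1 / 2 ≤ t) :
    t * (5 - t ^ 4) / 4 ≤ sin (π / 2 * t) := by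
  have hπ : π ^ 2 < 10 := by nlinarith [pi_lt_d2, pi_pos]
  have hcubic : 0 ≤ 5 * t ^ 2 - (1 - t) ^ 3 := by nlinarith
  calc t * (5 - t ^ 4) / 4
        = 1 - 5 / 4 * (1 - t) ^ 2 - (1 - t) ^ 2 * (5 * t ^ 2 - (1 - t) ^ 3) / 4 := by ring
    _ ≤ 1 - (π / 2 * (1 - t)) ^ 2 / 2 := by
        nlinarith [mul_nonneg (sq_nonneg (1 - t)) hcubic,
          mul_le_mul_of_nonneg_right hπ.le (sq_nonneg (1 - t))]
    _ ≤ cos (π / 2 * (1 - t)) := one_sub_sq_div_two_le_cos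
    _ = sin (π / 2 * t) := by rw [← sin_pi_div_two_sub]; ring_nf

lemma sin_pi_div_two_mul_lower {t : ℝ} (ht0 : 0 ≤ t) :
    t * (5 - t ^ 4) / 4 ≤ sin (π / 2 * t) := by
  rcases le_total t (1 / 2) with ht | ht
  · exact sin_pi_div_two_mul_lower_of_le_half ht0 ht
  · exact sin_pi_div_two_mul_lower_of_half_le ht

lemma sin_pi_div_two_mul_upper_of_le_three_quarters {t : ℝ} (ht0 : 0 ≤ t) (ht : t ≤ 3 / 4) :
    sin (π / 2 * t) ≤ t + (π - 2) / 2 * (t - t ^ 5) := by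
  have hπ : 9 / 16 * (π ^ 5 / 3840 + (π - 2) / 2) ≤ π ^ 3 / 48 := by
    nlinarith [pow_lt_pow_left₀ pi_lt_d2 pi_pos.le (by norm_num : 5 ≠ 0),
      pow_lt_pow_left₀ pi_gt_three (by norm_num) (by norm_num : 3 ≠ 0), pi_lt_d2]
  have hrem : 0 ≤ π ^ 3 / 48 - t ^ 2 * (π ^ 5 / 3840 + (π - 2) / 2) := by
    have hK : 0 ≤ π ^ 5 / 3840 + (π - 2) / 2 := by nlinarith [pi_gt_three, pow_pos pi_pos 5]
    have ht2 : t ^ 2 ≤ 9 / 16 := by nlinarith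
    nlinarith [mul_le_mul_of_nonneg_right ht2 hK]
  calc sin (π / 2 * t) ≤ π / 2 * t - (π / 2 * t) ^ 3 / 6 + (π / 2 * t) ^ 5 / 120 :=
        sin_le_sub_cube_add_pow_five (by positivity)
    _ = t + (π - 2) / 2 * (t - t ^ 5)
          - t ^ 3 * (π ^ 3 / 48 - t ^ 2 * (π ^ 5 / 3840 + (π - 2) / 2)) := by ring
    _ ≤ t + (π - 2) / 2 * (t - t ^ 5) := by
        have := mul_nonneg (pow_nonneg ht0 3) hrem
        linarith

lemma sin_pi_div_two_mul_upper_of_three_quarters_le {t : ℝ} (ht : 3 / 4 ≤ t) (ht1 : t ≤ 1) :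
    sin (π / 2 * t) ≤ t + (π - 2) / 2 * (t - t ^ 5) := by
  have hprod : 2 ≤ t * (1 + t) * (1 + t ^ 2) := by
    have h1 : 21 / 16 ≤ t * (1 + t) := by nlinarith
    have h2 : 25 / 16 ≤ 1 + t ^ 2 := by nlinarith
    nlinarith [mul_le_mul h1 h2 (by norm_num) (by linarith)]
  have hfactor : t - t ^ 5 = (1 - t) * (t * (1 + t) * (1 + t ^ 2)) := by ring
  nlinarith [sin_le_one (π / 2 * t), pi_gt_three,
    mul_le_mul_of_nonneg_left hprod (show 0 ≤ 1 - t by linarith)]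

lemma sin_pi_div_two_mul_upper {t : ℝ} (ht0 : 0 ≤ t) (ht1 : t ≤ 1) :
    sin (π / 2 * t) ≤ t + (π - 2) / 2 * (t - t ^ 5) := by
  rcases le_total t (3 / 4) with ht | ht
  · exact sin_pi_div_two_mul_upper_of_le_three_quarters ht0 ht
  · exact sin_pi_div_two_mul_upper_of_three_quarters_le ht ht1

theorem jiang_yun_quartic (x : ℝ) (hx : x ∈ Set.Ioc 0 (π/2)) :
    2/π + 1/(2*π^5) * (π^4 - 16*x^4) ≤ Real.sin x / x ∧
    Real.sin x / x ≤ 2/π + (π - 2)/π^5 * (π^4 - 16*x^4) := by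
  obtain ⟨hx0, hxπ⟩ := hx
  have hπ := pi_pos
  obtain ⟨t, rfl⟩ : ∃ t, x = π / 2 * t := ⟨2 / π * x, by field_simp⟩
  have ht0 : 0 < t := pos_of_mul_pos_right hx0 (by positivity)
  have ht1 : t ≤ 1 := by nlinarith
  rw [le_div_iff₀ hx0, div_le_iff₀ hx0]
  constructor
  · refine le_of_eq_of_le ?_ (sin_pi_div_two_mul_lower ht0.le)
    field_simp
    ring
  · refine (sin_pi_div_two_mul_upper ht0.le ht1).trans_eq ?_
    field_simp
    ring
end

section
/- For every natural number n ≥ 2 and all x in (0, π/2], it holds that 2/π + (2/(n·π^{n+1}))(π^n − (2x)^n) ≤ sin(x)/x ≤ 2/π + ((π − 2)/π^{n+1})(π^n − (2x)^n). -/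
open Real Set

/-- sin t / t is strictly decreasing on (0, π/2]. -/
lemma sinc_lt {x y : ℝ} (hx : 0 < x) (hxy : x < y) (hy : y ≤ π/2) :
    Real.sin y / y < Real.sin x / x := by
  have H : StrictAntiOn (fun t => Real.sin t / t) (Set.Icc x (π/2)) := by
    apply strictAntiOn_of_deriv_neg (convex_Icc _ _)
    · apply ContinuousOn.div (Real.continuous_sin.continuousOn) continuousOn_id
      intro t ht
      exact ne_of_gt (lt_of_lt_of_le hx ht.1)
    · intro t ht
      rw [interior_Icc] at ht
      have ht0 : 0 < t := lt_trans hx ht.1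
      have htpi : t < π/2 := ht.2
      have hder : HasDerivAt (fun t => Real.sin t / t)
          ((Real.cos t * t - Real.sin t * 1) / t ^ 2) t :=
        (Real.hasDerivAt_sin t).div (hasDerivAt_id t) (ne_of_gt ht0)
      rw [hder.deriv]
      apply div_neg_of_neg_of_pos _ (by positivity)
      have hcos : 0 < Real.cos t := Real.cos_pos_of_mem_Ioo ⟨by linarith [Real.pi_pos], htpi⟩
      have htan : t < Real.tan t := Real.lt_tan ht0 htpi
      rw [Real.tan_eq_sin_div_cos] at htan
      rw [lt_div_iff₀ hcos] at htan
      nlinarith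
  exact H ⟨le_refl x, by linarith⟩ ⟨le_of_lt hxy, hy⟩ hxy

/-- If f' changes sign at most once from - to never-positive-again... -/
lemma nonneg_of_deriv_sign (f f' : ℝ → ℝ) {a b : ℝ} (hab : a < b)
    (hc : ContinuousOn f (Set.Icc a b))
    (hd : ∀ x ∈ Set.Ioo a b, HasDerivAt f (f' x) x)
    (hsign : ∀ x ∈ Set.Ioo a b, ∀ y ∈ Set.Ioo a b, x < y → f' x < 0 → f' y ≤ 0)
    (ha : 0 ≤ f a) (hb : 0 ≤ f b) : ∀ z ∈ Set.Icc a b, 0 ≤ f z := by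
  intro z hz
  rcases eq_or_lt_of_le hz.1 with h1 | h1
  · rwa [← h1]
  rcases eq_or_lt_of_le hz.2 with h2 | h2
  · rwa [h2]
  by_contra hneg
  push_neg at hneg
  obtain ⟨c₁, hc₁, e₁⟩ := exists_hasDerivAt_eq_slope f f' h1
    (hc.mono (Set.Icc_subset_Icc le_rfl (le_of_lt h2)))
    (fun t ht => hd t ⟨ht.1, lt_trans ht.2 h2⟩)
  obtain ⟨c₂, hc₂, e₂⟩ := exists_hasDerivAt_eq_slope f f' h2
    (hc.mono (Set.Icc_subset_Icc (le_of_lt h1) le_rfl))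
    (fun t ht => hd t ⟨lt_trans h1 ht.1, ht.2⟩)
  have hneg1 : f' c₁ < 0 := by
    rw [e₁]
    apply div_neg_of_neg_of_pos <;> linarith
  have hpos2 : 0 < f' c₂ := by
    rw [e₂]
    apply div_pos <;> linarith
  have := hsign c₁ ⟨hc₁.1, lt_trans hc₁.2 h2⟩ c₂ ⟨lt_trans h1 hc₂.1, hc₂.2⟩
    (lt_trans hc₁.2 hc₂.1) hneg1
  linarith



lemma upper_core {x : ℝ} (hx : x ∈ Set.Icc 0 (π/2)) :
    Real.sin x ≤ x - 4*(π-2)/π^3 * x^3 := by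
  have hπ : 0 < π := Real.pi_pos
  set c : ℝ := 4*(π-2)/π^3 with hc
  have hf' : ∀ t : ℝ, HasDerivAt (fun s => s - c*s^3 - Real.sin s)
      (1 - 3*c*t^2 - Real.cos t) t := by
    intro t
    have h1 : HasDerivAt (fun s : ℝ => s - c*s^3 - Real.sin s)
        (1 - c*(3*t^(3-1)) - Real.cos t) t :=
      ((hasDerivAt_id t).sub (((hasDerivAt_pow 3 t)).const_mul c)).sub (Real.hasDerivAt_sin t)
    convert h1 using 1
    norm_num; ring
  have hf'' : ∀ t : ℝ, HasDerivAt (fun s => 1 - 3*c*s^2 - Real.cos s)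
      (Real.sin t - 6*c*t) t := by
    intro t
    have h1 : HasDerivAt (fun s : ℝ => 1 - 3*c*s^2 - Real.cos s)
        (0 - 3*c*(2*t^(2-1)) - (-Real.sin t)) t :=
      ((hasDerivAt_const t 1).sub ((hasDerivAt_pow 2 t).const_mul (3*c))).sub
        (Real.hasDerivAt_cos t)
    convert h1 using 1
    norm_num; ring
  have key : ∀ z ∈ Set.Icc 0 (π/2), 0 ≤ z - c*z^3 - Real.sin z := by
    apply nonneg_of_deriv_sign _ (fun t => 1 - 3*c*t^2 - Real.cos t) (by positivity)
    · fun_prop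
    · intro t _; exact hf' t
    · -- sign condition for f'
      intro u hu v hv huv hfu
      -- f'(0) = 0, so MVT gives p in (0,u) with f'' p < 0
      obtain ⟨p, hp, ep⟩ := exists_hasDerivAt_eq_slope
        (fun t => 1 - 3*c*t^2 - Real.cos t) (fun t => Real.sin t - 6*c*t) hu.1
        (by fun_prop) (fun t _ => hf'' t)
      have hfpneg : Real.sin p - 6*c*p < 0 := by
        rw [ep]
        apply div_neg_of_neg_of_pos
        · simp only [Real.cos_zero]; linarith
        · linarith [hu.1]
      have hsinc_p : Real.sin p / p < 6*c := by
        rw [div_lt_iff₀ hp.1]; linarith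
      -- f'' < 0 on (u, v)
      have hanti : StrictAntiOn (fun t => 1 - 3*c*t^2 - Real.cos t) (Set.Icc u v) := by
        apply strictAntiOn_of_deriv_neg (convex_Icc _ _) (by fun_prop)
        intro q hq
        rw [interior_Icc] at hq
        have hq0 : 0 < q := lt_trans hu.1 hq.1
        have hqpi : q ≤ π/2 := le_of_lt (lt_trans hq.2 hv.2)
        rw [(hf'' q).deriv]
        have : Real.sin q / q < Real.sin p / p :=
          sinc_lt hp.1 (lt_trans hp.2 hq.1) hqpi
        have : Real.sin q / q < 6*c := lt_trans this hsinc_p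
        rw [div_lt_iff₀ hq0] at this
        nlinarith
      have := hanti ⟨le_rfl, le_of_lt huv⟩ ⟨le_of_lt huv, le_rfl⟩ huv
      simp only at this
      linarith
    · norm_num
    · -- f(π/2) = 0
      have h1 : c*(π/2)^3 = (π-2)/2 := by
        rw [hc]; field_simp; ring
      rw [Real.sin_pi_div_two, h1]
      linarith
  have := key x hx
  linarith

lemma lower_core {x : ℝ} (hx : x ∈ Set.Icc 0 (π/2)) :
    3*x/π - 4*x^3/π^3 ≤ Real.sin x := by
  have hπ : 0 < π := Real.pi_pos
  have hg' : ∀ t : ℝ, HasDerivAt (fun s => Real.sin s - 3*s/π + 4*s^3/π^3)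
      (Real.cos t - 3/π + 12*t^2/π^3) t := by
    intro t
    have h1 : HasDerivAt (fun s : ℝ => Real.sin s - 3*s/π + 4*s^3/π^3)
        (Real.cos t - 3*1/π + 4*(3*t^(3-1))/π^3) t := by
      exact ((Real.hasDerivAt_sin t).sub (((hasDerivAt_id t).const_mul 3).div_const π)).add
        (((hasDerivAt_pow 3 t).const_mul 4).div_const (π^3))
    convert h1 using 1
    norm_num; ring
  have hg'' : ∀ t : ℝ, HasDerivAt (fun s => Real.cos s - 3/π + 12*s^2/π^3)
      (24*t/π^3 - Real.sin t) t := by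
    intro t
    have h1 : HasDerivAt (fun s : ℝ => Real.cos s - 3/π + 12*s^2/π^3)
        ((-Real.sin t) - 0 + 12*(2*t^(2-1))/π^3) t := by
      exact ((Real.hasDerivAt_cos t).sub (hasDerivAt_const t (3/π))).add
        (((hasDerivAt_pow 2 t).const_mul 12).div_const (π^3))
    convert h1 using 1
    norm_num; ring
  have hg'pi : Real.cos (π/2) - 3/π + 12*(π/2)^2/π^3 = 0 := by
    rw [Real.cos_pi_div_two]
    field_simp
    ring
  have key : ∀ z ∈ Set.Icc 0 (π/2), 0 ≤ Real.sin z - 3*z/π + 4*z^3/π^3 := by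
    apply nonneg_of_deriv_sign _ (fun t => Real.cos t - 3/π + 12*t^2/π^3) (by positivity)
    · fun_prop
    · intro t _; exact hg' t
    · intro u hu v hv huv hgu
      by_contra hgv
      push_neg at hgv
      obtain ⟨p, hp, ep⟩ := exists_hasDerivAt_eq_slope
        (fun t => Real.cos t - 3/π + 12*t^2/π^3) (fun t => 24*t/π^3 - Real.sin t) huv
        (by fun_prop) (fun t _ => hg'' t)
      have hppos : 0 < 24*p/π^3 - Real.sin p := by
        rw [ep]
        apply div_pos <;> linarith
      have hp0 : 0 < p := lt_trans hu.1 hp.1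
      have hsincp : Real.sin p / p < 24/π^3 := by
        rw [div_lt_iff₀ hp0]
        have h9 : 24/π^3*p = 24*p/π^3 := by ring
        linarith
      have hmono : StrictMonoOn (fun t => Real.cos t - 3/π + 12*t^2/π^3) (Set.Icc v (π/2)) := by
        apply strictMonoOn_of_deriv_pos (convex_Icc _ _) (by fun_prop)
        intro q hq
        rw [interior_Icc] at hq
        have hq0 : 0 < q := lt_trans hv.1 hq.1
        rw [(hg'' q).deriv]
        have h1 : Real.sin q / q < Real.sin p / p :=
          sinc_lt hp0 (lt_trans hp.2 (lt_of_lt_of_le hq.1 le_rfl)) (le_of_lt hq.2)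
        have h2 : Real.sin q / q < 24/π^3 := lt_trans h1 hsincp
        rw [div_lt_iff₀ hq0] at h2
        have h9 : 24/π^3*q = 24*q/π^3 := by ring
        linarith
      have hlt := hmono (Set.left_mem_Icc.mpr (le_of_lt hv.2)) (Set.right_mem_Icc.mpr (le_of_lt hv.2)) hv.2
      simp only at hlt
      linarith [hg'pi]
    · norm_num
    · have h1 : 4*(π/2)^3/π^3 = 1/2 := by field_simp; ring
      have h2 : 3*(π/2)/π = 3/2 := by field_simp
      rw [Real.sin_pi_div_two, h1, h2]
      norm_num
  have := key x hx
  linarith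



lemma lemA (n : ℕ) (hn : 2 ≤ n) {t : ℝ} (ht0 : 0 ≤ t) (ht1 : t ≤ 1) :
    2*(1 - t^n) ≤ (n:ℝ)*(1 - t^2) := by
  induction n, hn using Nat.le_induction with
  | base => norm_num
  | succ m hm ih =>
    have htm : t^m ≤ 1 := pow_le_one₀ ht0 ht1
    have htm2 : t^m ≤ t := by
      have := pow_le_pow_of_le_one ht0 ht1 (show 1 ≤ m by omega)
      rwa [pow_one] at this
    have h8 : 0 ≤ (1 - t) * (1 + t - 2*t^m) :=
      mul_nonneg (by linarith) (by linarith)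
    push_cast
    rw [pow_succ]
    nlinarith [ih]

theorem li_li (n : ℕ) (hn : 2 ≤ n) (x : ℝ) (hx : x ∈ Set.Ioc 0 (π/2)) :
    2/π + 2/(n*π^(n+1)) * (π^n - (2*x)^n) ≤ Real.sin x / x ∧
    Real.sin x / x ≤ 2/π + (π - 2)/π^(n+1) * (π^n - (2*x)^n) := by
  obtain ⟨hx0, hx2⟩ := hx
  have hπ : 0 < π := Real.pi_pos
  have hπ3 : 3 < π := Real.pi_gt_three
  have hn0 : (0:ℝ) < n := by exact_mod_cast Nat.lt_of_lt_of_le Nat.zero_lt_two hn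
  set t := 2*x/π with htdef
  have ht0 : 0 < t := by positivity
  have ht1 : t ≤ 1 := by rw [htdef, div_le_one hπ]; linarith
  have h2x : 2*x = t*π := by rw [htdef]; field_simp
  have hpow : (2*x)^n = t^n * π^n := by rw [h2x, mul_pow]
  have hA : 2*(1 - t^n) ≤ (n:ℝ)*(1 - t^2) := lemA n hn ht0.le ht1
  constructor
  · -- lower bound
    have low2 := lower_core ⟨hx0.le, hx2⟩
    have hs : 3/π - 4*x^2/π^3 ≤ Real.sin x / x := by
      rw [le_div_iff₀ hx0]
      have he : (3/π - 4*x^2/π^3)*x = 3*x/π - 4*x^3/π^3 := by ring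
      linarith
    have e1 : 2/(n*π^(n+1)) * (π^n - (2*x)^n) = 2*(1-t^n)/((n:ℝ)*π) := by
      rw [hpow, pow_succ]
      have hπn : (π:ℝ)^n ≠ 0 := by positivity
      field_simp
    have e2 : (1:ℝ)/π - 4*x^2/π^3 = (1-t^2)/π := by
      rw [htdef]; field_simp; ring
    have step : 2*(1-t^n)/((n:ℝ)*π) ≤ (1-t^2)/π := by
      rw [div_le_div_iff₀ (by positivity) hπ]
      nlinarith [mul_le_mul_of_nonneg_right hA hπ.le]
    have h3 : (2:ℝ)/π + 1/π = 3/π := by ring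
    rw [e1]
    linarith [step, e2.symm.le]
  · -- upper bound
    have up2 := upper_core ⟨hx0.le, hx2⟩
    have hs : Real.sin x / x ≤ 1 - 4*(π-2)*x^2/π^3 := by
      rw [div_le_iff₀ hx0]
      have he : (1 - 4*(π-2)*x^2/π^3)*x = x - 4*(π-2)/π^3*x^3 := by ring
      linarith
    have e3 : (π-2)/π^(n+1) * (π^n - (2*x)^n) = (π-2)*(1-t^n)/π := by
      rw [hpow, pow_succ]
      have hπn : (π:ℝ)^n ≠ 0 := by positivity
      field_simp
    have e4 : 1 - 4*(π-2)*x^2/π^3 = 2/π + (π-2)*(1-t^2)/π := by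
      rw [htdef]; field_simp; ring
    have htn : t^n ≤ t^2 := pow_le_pow_of_le_one ht0.le ht1 hn
    have step : (π-2)*(1-t^2)/π ≤ (π-2)*(1-t^n)/π := by
      have h9 : (π-2)*(t^n) ≤ (π-2)*t^2 := mul_le_mul_of_nonneg_left htn (by linarith)
      rw [div_le_div_iff₀ hπ hπ]
      nlinarith [mul_le_mul_of_nonneg_right h9 hπ.le]
    rw [e3]
    linarith
end

section
/- For each x in (0, π/2), the function q ↦ sin(x)/x − 2/π − (2/(qπ))(1 − (2x/π)^q) is strictly increasing in q on (0, ∞). -/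
/-!
With `t = 2x/π ∈ (0, 1)` the function is a constant plus `(2/π) · (t^q - 1)/q`, and
`(t^q - 1)/q` is the slope of the secant of the strictly convex function `q ↦ t^q` between
`0` and `q`, which is strictly increasing in `q`.
-/

open Real

theorem Real.strictConvexOn_rpow_left {b : ℝ} (hb₀ : 0 < b) (hb₁ : b ≠ 1) :
    StrictConvexOn ℝ Set.univ fun x : ℝ => b ^ x := by
  refine ⟨convex_univ, fun x _ y _ hxy a c ha hc hac => ?_⟩
  have hlog : log b ≠ 0 := log_ne_zero_of_pos_of_ne_one hb₀ hb₁
  simp only [rpow_def_of_pos hb₀, smul_eq_mul]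
  calc exp (log b * (a * x + c * y)) = exp (a * (log b * x) + c * (log b * y)) := by ring_nf
    _ < a * exp (log b * x) + c * exp (log b * y) :=
      strictConvexOn_exp.2 (Set.mem_univ _) (Set.mem_univ _)
        (by simpa [hlog] using hxy) ha hc hac

theorem Real.strictMonoOn_rpow_left_sub_one_div {b : ℝ} (hb₀ : 0 < b) (hb₁ : b ≠ 1) :
    StrictMonoOn (fun q : ℝ => (b ^ q - 1) / q) {0}ᶜ := by
  intro p hp q hq hpq
  simpa using (strictConvexOn_rpow_left hb₀ hb₁).secant_strict_mono (Set.mem_univ 0)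
    (Set.mem_univ p) (Set.mem_univ q) hp hq hpq

theorem strat_B (x : ℝ) (hx : x ∈ Set.Ioo 0 (π/2)) :
    StrictMonoOn (fun q : ℝ => Real.sin x / x - 2/π - 2/(q*π) * (1 - (2*x/π) ^ q))
      (Set.Ioi 0) := by
  obtain ⟨hx₀, hx₁⟩ := hx
  have ht₀ : 0 < 2 * x / π := by positivity
  have ht₁ : 2 * x / π ≠ 1 := ((div_lt_one pi_pos).2 (by linarith)).ne
  intro p hp q hq hpq
  have hslope := strictMonoOn_rpow_left_sub_one_div ht₀ ht₁ (ne_of_gt hp) (ne_of_gt hq) hpq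
  have hrewrite (r : ℝ) :
      2 / (r * π) * (1 - (2 * x / π) ^ r) = -(2 / π) * (((2 * x / π) ^ r - 1) / r) := by
    ring
  simp only [hrewrite]
  linarith [mul_lt_mul_of_pos_left hslope (by positivity : (0 : ℝ) < 2 / π)]
end

section
/- For all x in (0, π/2), it holds that x·cos(x) + cos(x)·sin(x) + x²·sin(x) − sin(x) − x < 0. -/
open Real
private lemma key {f g : ℝ → ℝ} (h0 : f 0 = 0) (hfg : ∀ y, HasDerivAt f (g y) y)
    (hg : ∀ y, 0 ≤ y → 0 ≤ g y) {x : ℝ} (hx : 0 ≤ x) : 0 ≤ f x := by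
  have hdiff : Differentiable ℝ f := fun y => (hfg y).differentiableAt
  have hm : MonotoneOn f (Set.Ici 0) := by
    apply monotoneOn_of_deriv_nonneg (convex_Ici 0) hdiff.continuous.continuousOn
      hdiff.differentiableOn
    intro y hy
    rw [(hfg y).deriv]
    exact hg y (le_of_lt (by simpa using hy))
  calc (0:ℝ) = f 0 := h0.symm
    _ ≤ f x := hm (by simp) (by simpa using hx) hx

private lemma sin_ge3 {x : ℝ} (hx : 0 ≤ x) : x - x^3/6 ≤ Real.sin x := by
  have h := key (f := fun t => Real.sin t - t + t^3/6)
      (g := fun t => Real.cos t - 1 + t^2/2) (by norm_num)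
      (fun y => by
        have h1 : HasDerivAt (fun t : ℝ => Real.sin t - t + t^3/6)
            (Real.cos y - 1 + (3 * y^(3-1) : ℝ)/6) y :=
          ((Real.hasDerivAt_sin y).sub (hasDerivAt_id y)).add
            ((hasDerivAt_pow 3 y).div_const 6)
        convert h1 using 1; norm_num; ring)
      (fun y hy => by nlinarith [Real.one_sub_sq_div_two_le_cos (x := y)]) hx
  linarith

private lemma cos_le4 {x : ℝ} (hx : 0 ≤ x) : Real.cos x ≤ 1 - x^2/2 + x^4/24 := by
  have h := key (f := fun t => 1 - t^2/2 + t^4/24 - Real.cos t)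
      (g := fun t => -t + t^3/6 + Real.sin t) (by norm_num)
      (fun y => by
        have h1 : HasDerivAt (fun t : ℝ => 1 - t^2/2 + t^4/24 - Real.cos t)
            (((0:ℝ) - (2*y^(2-1))/2 + (4*y^(4-1))/24) - (-Real.sin y)) y :=
          (((hasDerivAt_const y (1:ℝ)).sub ((hasDerivAt_pow 2 y).div_const 2)).add
            ((hasDerivAt_pow 4 y).div_const 24)).sub (Real.hasDerivAt_cos y)
        convert h1 using 1; norm_num; ring)
      (fun y hy => by nlinarith [sin_ge3 hy]) hx
  linarith

private lemma sin_le5 {x : ℝ} (hx : 0 ≤ x) : Real.sin x ≤ x - x^3/6 + x^5/120 := by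
  have h := key (f := fun t => t - t^3/6 + t^5/120 - Real.sin t)
      (g := fun t => 1 - t^2/2 + t^4/24 - Real.cos t) (by norm_num)
      (fun y => by
        have h1 : HasDerivAt (fun t : ℝ => t - t^3/6 + t^5/120 - Real.sin t)
            (((1:ℝ) - (3*y^(3-1))/6 + (5*y^(5-1))/120) - Real.cos y) y :=
          (((hasDerivAt_id y).sub ((hasDerivAt_pow 3 y).div_const 6)).add
            ((hasDerivAt_pow 5 y).div_const 120)).sub (Real.hasDerivAt_sin y)
        convert h1 using 1; norm_num; ring)
      (fun y hy => by nlinarith [cos_le4 hy]) hx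
  linarith

private lemma cos_ge6 {x : ℝ} (hx : 0 ≤ x) :
    1 - x^2/2 + x^4/24 - x^6/720 ≤ Real.cos x := by
  have h := key (f := fun t => Real.cos t - 1 + t^2/2 - t^4/24 + t^6/720)
      (g := fun t => -Real.sin t + t - t^3/6 + t^5/120) (by norm_num)
      (fun y => by
        have h1 : HasDerivAt (fun t : ℝ => Real.cos t - 1 + t^2/2 - t^4/24 + t^6/720)
            ((((-Real.sin y - 0) + (2*y^(2-1))/2) - (4*y^(4-1))/24) + (6*y^(6-1))/720) y :=
          ((((Real.hasDerivAt_cos y).sub (hasDerivAt_const y (1:ℝ))).add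
            ((hasDerivAt_pow 2 y).div_const 2)).sub
            ((hasDerivAt_pow 4 y).div_const 24)).add ((hasDerivAt_pow 6 y).div_const 720)
        convert h1 using 1; norm_num; ring)
      (fun y hy => by nlinarith [sin_le5 hy]) hx
  linarith

private lemma sin_ge7 {x : ℝ} (hx : 0 ≤ x) :
    x - x^3/6 + x^5/120 - x^7/5040 ≤ Real.sin x := by
  have h := key (f := fun t => Real.sin t - t + t^3/6 - t^5/120 + t^7/5040)
      (g := fun t => Real.cos t - 1 + t^2/2 - t^4/24 + t^6/720) (by norm_num)
      (fun y => by
        have h1 : HasDerivAt (fun t : ℝ => Real.sin t - t + t^3/6 - t^5/120 + t^7/5040)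
            ((((Real.cos y - 1) + (3*y^(3-1))/6) - (5*y^(5-1))/120) + (7*y^(7-1))/5040) y :=
          ((((Real.hasDerivAt_sin y).sub (hasDerivAt_id y)).add
            ((hasDerivAt_pow 3 y).div_const 6)).sub
            ((hasDerivAt_pow 5 y).div_const 120)).add ((hasDerivAt_pow 7 y).div_const 5040)
        convert h1 using 1; norm_num; ring)
      (fun y hy => by nlinarith [cos_ge6 hy]) hx
  linarith

private lemma cos_le8 {x : ℝ} (hx : 0 ≤ x) :
    Real.cos x ≤ 1 - x^2/2 + x^4/24 - x^6/720 + x^8/40320 := by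
  have h := key (f := fun t => 1 - t^2/2 + t^4/24 - t^6/720 + t^8/40320 - Real.cos t)
      (g := fun t => -t + t^3/6 - t^5/120 + t^7/5040 + Real.sin t) (by norm_num)
      (fun y => by
        have h1 : HasDerivAt
            (fun t : ℝ => 1 - t^2/2 + t^4/24 - t^6/720 + t^8/40320 - Real.cos t)
            (((((0:ℝ) - (2*y^(2-1))/2 + (4*y^(4-1))/24) - (6*y^(6-1))/720) +
              (8*y^(8-1))/40320) - (-Real.sin y)) y :=
          (((((hasDerivAt_const y (1:ℝ)).sub ((hasDerivAt_pow 2 y).div_const 2)).add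
            ((hasDerivAt_pow 4 y).div_const 24)).sub
            ((hasDerivAt_pow 6 y).div_const 720)).add
            ((hasDerivAt_pow 8 y).div_const 40320)).sub (Real.hasDerivAt_cos y)
        convert h1 using 1; norm_num; ring)
      (fun y hy => by nlinarith [sin_ge7 hy]) hx
  linarith

theorem mtp_neg (x : ℝ) (hx : x ∈ Set.Ioo 0 (π/2)) :
    x * Real.cos x + Real.cos x * Real.sin x + x^2 * Real.sin x - Real.sin x - x < 0 := by
  obtain ⟨hx0, hx2⟩ := hx
  have hx0' : (0:ℝ) ≤ x := hx0.le
  have hpi : π < 3.15 := by linarith [Real.pi_lt_d2]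
  have hxlt : x < 1.575 := by linarith
  have hy : x^2 ≤ 2.5 := by nlinarith
  have hsl : x - x^3/6 + x^5/120 - x^7/5040 ≤ Real.sin x := sin_ge7 hx0'
  have hsu : Real.sin x ≤ x - x^3/6 + x^5/120 := sin_le5 hx0'
  have hc1 : Real.cos x - 1 ≤ -x^2/2 + x^4/24 - x^6/720 + x^8/40320 := by
    have := cos_le8 hx0'; linarith
  have hc1n : Real.cos x - 1 ≤ 0 := by linarith [Real.cos_le_one x]
  have h72 : x^7 ≤ 2.5 * x^5 := by nlinarith [pow_nonneg hx0' 5]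
  have h52 : x^5 ≤ 2.5 * x^3 := by nlinarith [pow_nonneg hx0' 3]
  have h32 : x^3 ≤ 2.5 * x := by nlinarith
  have hL0 : 0 ≤ x - x^3/6 + x^5/120 - x^7/5040 := by
    nlinarith [pow_nonneg hx0' 5, pow_nonneg hx0' 3]
  -- polynomial bound
  have hy3 : (x^2)^3 ≤ 15.625 := by nlinarith [sq_nonneg x]
  have hq : -1/180 + 11*(x^2)/15120 - 29*(x^2)^2/1209600 + (x^2)^3/2073600
      - (x^2)^4/203212800 < 0 := by
    have h2n : (0:ℝ) ≤ (x^2)^2 := sq_nonneg _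
    have h4n : (0:ℝ) ≤ (x^2)^4 := by positivity
    linarith
  have hx7 : 0 < x^7 := pow_pos hx0 7
  have hP : (x + (x - x^3/6 + x^5/120 - x^7/5040)) *
        (-x^2/2 + x^4/24 - x^6/720 + x^8/40320) + x^2 * (x - x^3/6 + x^5/120) < 0 := by
    have heq : (x + (x - x^3/6 + x^5/120 - x^7/5040)) *
        (-x^2/2 + x^4/24 - x^6/720 + x^8/40320) + x^2 * (x - x^3/6 + x^5/120) =
        x^7 * (-1/180 + 11*(x^2)/15120 - 29*(x^2)^2/1209600 + (x^2)^3/2073600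
          - (x^2)^4/203212800) := by ring
    rw [heq]
    exact mul_neg_of_pos_of_neg hx7 hq
  -- assemble
  have h1 : (x + Real.sin x) * (Real.cos x - 1) ≤
      (x + (x - x^3/6 + x^5/120 - x^7/5040)) * (Real.cos x - 1) := by
    have hm : (Real.sin x - (x - x^3/6 + x^5/120 - x^7/5040)) * (Real.cos x - 1) ≤ 0 :=
      mul_nonpos_of_nonneg_of_nonpos (by linarith) hc1n
    have he : (x + Real.sin x) * (Real.cos x - 1) =
        (x + (x - x^3/6 + x^5/120 - x^7/5040)) * (Real.cos x - 1) +
        (Real.sin x - (x - x^3/6 + x^5/120 - x^7/5040)) * (Real.cos x - 1) := by ring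
    rw [he]; linarith
  have h2 : (x + (x - x^3/6 + x^5/120 - x^7/5040)) * (Real.cos x - 1) ≤
      (x + (x - x^3/6 + x^5/120 - x^7/5040)) *
        (-x^2/2 + x^4/24 - x^6/720 + x^8/40320) := by
    have := mul_le_mul_of_nonneg_left hc1 (by linarith : (0:ℝ) ≤ x + (x - x^3/6 + x^5/120 - x^7/5040))
    linarith
  have h3 : x^2 * Real.sin x ≤ x^2 * (x - x^3/6 + x^5/120) :=
    mul_le_mul_of_nonneg_left hsu (sq_nonneg x)
  have hfinal : (x + Real.sin x) * (Real.cos x - 1) + x^2 * Real.sin x < 0 := by linarith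
  have hE : x * Real.cos x + Real.cos x * Real.sin x + x^2 * Real.sin x - Real.sin x - x =
      (x + Real.sin x) * (Real.cos x - 1) + x^2 * Real.sin x := by ring
  rw [hE]; exact hfinal
end

section
/- For all x in (0, π/2), it holds that x·cos(x)·sin(x) − 2·sin²(x) + x² > 0. -/
open Real

private lemma deriv_nonneg_imp (f f' : ℝ → ℝ) (hd : ∀ t, HasDerivAt f (f' t) t)
    (h0 : f 0 = 0) (hge : ∀ t, 0 ≤ t → 0 ≤ f' t) : ∀ t, 0 ≤ t → 0 ≤ f t := by
  have hmono : MonotoneOn f (Set.Ici 0) := by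
    apply monotoneOn_of_deriv_nonneg (convex_Ici 0)
    · exact (Differentiable.continuous fun t => (hd t).differentiableAt).continuousOn
    · exact fun t ht => ((hd t).differentiableAt).differentiableWithinAt
    · intro t ht
      rw [interior_Ici] at ht
      rw [(hd t).deriv]
      exact hge t (le_of_lt ht)
  intro t ht
  calc (0:ℝ) = f 0 := h0.symm
    _ ≤ f t := hmono Set.self_mem_Ici ht ht

private lemma sin_ge_cubic : ∀ t : ℝ, 0 ≤ t → t - t^3/6 ≤ Real.sin t := by
  have := deriv_nonneg_imp (fun t => Real.sin t - (t - t^3/6))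
    (fun t => Real.cos t - (1 - t^2/2))
    (fun t => by
      have h1 := Real.hasDerivAt_sin t
      have h2 : HasDerivAt (fun t : ℝ => t - t^3/6) (1 - t^2/2) t := by
        have := ((hasDerivAt_pow 3 t).div_const 6)
        have h3 := (hasDerivAt_id t).sub this
        exact h3.congr_deriv (by ring)
      exact h1.sub h2)
    (by simp)
    (fun t ht => by
      have := Real.one_sub_sq_div_two_le_cos (x := t); linarith)
  intro t ht; have := this t ht; simpa using by linarith [this]

private lemma cos_le_quartic : ∀ t : ℝ, 0 ≤ t → Real.cos t ≤ 1 - t^2/2 + t^4/24 := by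
  have := deriv_nonneg_imp (fun t => (1 - t^2/2 + t^4/24) - Real.cos t)
    (fun t => (-t + t^3/6) + Real.sin t)
    (fun t => by
      have h1 : HasDerivAt (fun t : ℝ => 1 - t^2/2 + t^4/24) (-t + t^3/6) t := by
        have h2 := ((hasDerivAt_pow 2 t).div_const 2)
        have h4 := ((hasDerivAt_pow 4 t).div_const 24)
        have := ((hasDerivAt_const t (1:ℝ)).sub h2).add h4
        exact this.congr_deriv (by ring)
      have := h1.sub (Real.hasDerivAt_cos t)
      exact this.congr_deriv (by ring)
      )
    (by simp)
    (fun t ht => by have := sin_ge_cubic t ht; linarith)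
  intro t ht; have := this t ht; beta_reduce at this; linarith

private lemma sin_le_quintic : ∀ t : ℝ, 0 ≤ t → Real.sin t ≤ t - t^3/6 + t^5/120 := by
  have := deriv_nonneg_imp (fun t => (t - t^3/6 + t^5/120) - Real.sin t)
    (fun t => (1 - t^2/2 + t^4/24) - Real.cos t)
    (fun t => by
      have h1 : HasDerivAt (fun t : ℝ => t - t^3/6 + t^5/120) (1 - t^2/2 + t^4/24) t := by
        have h3 := ((hasDerivAt_pow 3 t).div_const 6)
        have h5 := ((hasDerivAt_pow 5 t).div_const 120)
        have := ((hasDerivAt_id t).sub h3).add h5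
        exact this.congr_deriv (by ring)
      exact h1.sub (Real.hasDerivAt_sin t))
    (by simp)
    (fun t ht => by have := cos_le_quartic t ht; linarith)
  intro t ht; have := this t ht; beta_reduce at this; linarith

private lemma cos_ge_sextic : ∀ t : ℝ, 0 ≤ t → 1 - t^2/2 + t^4/24 - t^6/720 ≤ Real.cos t := by
  have := deriv_nonneg_imp (fun t => Real.cos t - (1 - t^2/2 + t^4/24 - t^6/720))
    (fun t => (t - t^3/6 + t^5/120) - Real.sin t)
    (fun t => by
      have h1 : HasDerivAt (fun t : ℝ => 1 - t^2/2 + t^4/24 - t^6/720) (-t + t^3/6 - t^5/120) t := by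
        have h2 := ((hasDerivAt_pow 2 t).div_const 2)
        have h4 := ((hasDerivAt_pow 4 t).div_const 24)
        have h6 := ((hasDerivAt_pow 6 t).div_const 720)
        have := (((hasDerivAt_const t (1:ℝ)).sub h2).add h4).sub h6
        exact this.congr_deriv (by ring)
      have := (Real.hasDerivAt_cos t).sub h1
      exact this.congr_deriv (by ring))
    (by simp)
    (fun t ht => by have := sin_le_quintic t ht; linarith)
  intro t ht; have := this t ht; beta_reduce at this; linarith

private lemma sin_ge_septic : ∀ t : ℝ, 0 ≤ t → t - t^3/6 + t^5/120 - t^7/5040 ≤ Real.sin t := by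
  have := deriv_nonneg_imp (fun t => Real.sin t - (t - t^3/6 + t^5/120 - t^7/5040))
    (fun t => Real.cos t - (1 - t^2/2 + t^4/24 - t^6/720))
    (fun t => by
      have h1 : HasDerivAt (fun t : ℝ => t - t^3/6 + t^5/120 - t^7/5040)
          (1 - t^2/2 + t^4/24 - t^6/720) t := by
        have h3 := ((hasDerivAt_pow 3 t).div_const 6)
        have h5 := ((hasDerivAt_pow 5 t).div_const 120)
        have h7 := ((hasDerivAt_pow 7 t).div_const 5040)
        have := (((hasDerivAt_id t).sub h3).add h5).sub h7
        exact this.congr_deriv (by ring)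
      exact (Real.hasDerivAt_sin t).sub h1)
    (by simp)
    (fun t ht => by have := cos_ge_sextic t ht; linarith)
  intro t ht; have := this t ht; beta_reduce at this; linarith

theorem mtp_pos (x : ℝ) (hx : x ∈ Set.Ioo 0 (π/2)) :
    x * Real.cos x * Real.sin x - 2 * (Real.sin x)^2 + x^2 > 0 := by
  obtain ⟨hx0, hx2⟩ := hx
  set t := 2 * x with ht
  have ht0 : 0 ≤ t := by positivity
  have htpi : t < π := by linarith
  have hpi : π < 3.15 := Real.pi_lt_d2
  have hsin : t - t^3/6 + t^5/120 - t^7/5040 ≤ Real.sin t := sin_ge_septic t ht0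
  have hcos : 1 - t^2/2 + t^4/24 - t^6/720 ≤ Real.cos t := cos_ge_sextic t ht0
  have hs2 : Real.sin t = 2 * Real.sin x * Real.cos x := Real.sin_two_mul x
  have hc2 : Real.cos t = 1 - 2 * (Real.sin x)^2 := by
    rw [ht, Real.cos_two_mul']
    have := Real.sin_sq_add_cos_sq x; linarith
  have htx : t = 2 * x := ht
  -- expression = (t/4) sin t + cos t - 1 + t^2/4
  have key : (t/4) * Real.sin t + Real.cos t - 1 + t^2/4 > 0 := by
    have ht315 : t < 3.15 := lt_trans htpi hpi
    have htpos : 0 < t := by positivity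
    have h1 : (t/4) * (t - t^3/6 + t^5/120 - t^7/5040) ≤ (t/4) * Real.sin t :=
      mul_le_mul_of_nonneg_left hsin (by positivity)
    have h2 : t^6/1440 - t^8/20160 > 0 := by
      have h14 : (0:ℝ) < 14 - t^2 := by nlinarith
      nlinarith [mul_pos (pow_pos htpos 6) h14]
    nlinarith [h1, hcos, h2]
  have : x * Real.cos x * Real.sin x - 2 * (Real.sin x)^2 + x^2
      = (t/4) * Real.sin t + Real.cos t - 1 + t^2/4 := by
    rw [hs2, hc2, htx]; ring
  linarith [key, this.ge]
end

section
/- For all q ≥ 2 and all x in (0, π/2), it holds that sin(x)/x < 2/π + ((π − 2)/π^{q+1})(π^q − (2x)^q), and among such q the bound with q = 2 is the smallest (best) upper bound. -/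
/-!
With `t = 2x/π ∈ (0, 1)` the bound reads `1 - (1 - 2/π) t^q`, which increases with `q` since `t^q`
decreases; so everything reduces to `q = 2`, i.e. to `sin x / x < 1 - 4(π - 2)/π³ · x²`.
That is `(x - sin x)/x³ > (π/2 - 1)/(π/2)³`, which holds because `(x - sin x)/x³` is strictly
decreasing on `(0, π/2]`: the numerator of its derivative is `x² (3 sin x - x cos x - 2x)`, and
differentiating twice more, `3 sin x - x cos x - 2x < 0` follows from `x cos x < sin x`, i.e. `x < tan x`.
-/

open Real Set

lemma strictAntiOn_of_hasDerivAt_neg {D : Set ℝ} (hD : Convex ℝ D) {f f' : ℝ → ℝ}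
    (hf : ∀ x ∈ D, HasDerivAt f (f' x) x) (hf' : ∀ x ∈ interior D, f' x < 0) :
    StrictAntiOn f D :=
  strictAntiOn_of_hasDerivWithinAt_neg hD (fun x hx ↦ (hf x hx).continuousAt.continuousWithinAt)
    (fun x hx ↦ (hf x (interior_subset hx)).hasDerivWithinAt) hf'

namespace Real

lemma mul_cos_lt_sin {x : ℝ} (hx₀ : 0 < x) (hx : x < π / 2) : x * cos x < sin x := by
  have hcos : 0 < cos x := cos_pos_of_mem_Ioo ⟨by linarith [pi_pos], hx⟩
  have htan := lt_tan hx₀ hx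
  rwa [tan_eq_sin_div_cos, lt_div_iff₀ hcos] at htan

lemma two_mul_cos_add_mul_sin_lt_two {x : ℝ} (hx₀ : 0 < x) (hx : x ≤ π / 2) :
    2 * cos x + x * sin x < 2 := by
  have hderiv (y : ℝ) : HasDerivAt (fun y ↦ 2 * cos y + y * sin y) (y * cos y - sin y) y :=
    (((hasDerivAt_cos y).const_mul 2).add ((hasDerivAt_id' y).mul (hasDerivAt_sin y))).congr_deriv
      (by ring)
  have hanti : StrictAntiOn (fun y ↦ 2 * cos y + y * sin y) (Icc 0 (π / 2)) :=
    strictAntiOn_of_hasDerivAt_neg (convex_Icc _ _) (fun y _ ↦ hderiv y) fun y hy ↦ by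
      rw [interior_Icc] at hy
      linarith [mul_cos_lt_sin hy.1 hy.2]
  simpa using hanti ⟨le_rfl, by linarith⟩ ⟨hx₀.le, hx⟩ hx₀

lemma three_mul_sin_lt {x : ℝ} (hx₀ : 0 < x) (hx : x ≤ π / 2) :
    3 * sin x < x * cos x + 2 * x := by
  have hderiv (y : ℝ) : HasDerivAt (fun y ↦ 3 * sin y - y * cos y - 2 * y)
      (2 * cos y + y * sin y - 2) y :=
    ((((hasDerivAt_sin y).const_mul 3).sub ((hasDerivAt_id' y).mul (hasDerivAt_cos y))).sub
      ((hasDerivAt_id' y).const_mul 2)).congr_deriv (by ring)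
  have hanti : StrictAntiOn (fun y ↦ 3 * sin y - y * cos y - 2 * y) (Icc 0 (π / 2)) :=
    strictAntiOn_of_hasDerivAt_neg (convex_Icc _ _) (fun y _ ↦ hderiv y) fun y hy ↦ by
      rw [interior_Icc] at hy
      linarith [two_mul_cos_add_mul_sin_lt_two hy.1 hy.2.le]
  have := hanti ⟨le_rfl, by linarith⟩ ⟨hx₀.le, hx⟩ hx₀
  simp only [sin_zero, mul_zero, cos_zero, sub_zero] at this
  linarith

lemma strictAntiOn_sub_sin_div_pow_three :
    StrictAntiOn (fun x ↦ (x - sin x) / x ^ 3) (Ioc 0 (π / 2)) := by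
  have hderiv (x : ℝ) (hx : x ≠ 0) : HasDerivAt (fun x ↦ (x - sin x) / x ^ 3)
      (x ^ 2 * (3 * sin x - x * cos x - 2 * x) / (x ^ 3) ^ 2) x :=
    (((hasDerivAt_id' x).sub (hasDerivAt_sin x)).div (hasDerivAt_pow 3 x)
      (pow_ne_zero 3 hx)).congr_deriv (by simp only [Pi.sub_apply]; push_cast; ring)
  refine strictAntiOn_of_hasDerivAt_neg (convex_Ioc _ _) (fun x hx ↦ hderiv x hx.1.ne') ?_
  intro x hx
  obtain ⟨hx₀, hx⟩ : 0 < x ∧ x < π / 2 := by rwa [interior_Ioc] at hx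
  have hneg : 3 * sin x - x * cos x - 2 * x < 0 := by linarith [three_mul_sin_lt hx₀ hx.le]
  exact div_neg_of_neg_of_pos (mul_neg_of_pos_of_neg (by positivity) hneg) (by positivity)

lemma sin_div_lt_one_sub_mul_sq {x : ℝ} (hx₀ : 0 < x) (hx : x < π / 2) :
    sin x / x < 1 - 4 * (π - 2) / π ^ 3 * x ^ 2 := by
  have hlt := strictAntiOn_sub_sin_div_pow_three ⟨hx₀, hx.le⟩ ⟨by positivity, le_rfl⟩ hx
  have hend : (π / 2 - sin (π / 2)) / (π / 2) ^ 3 = 4 * (π - 2) / π ^ 3 := by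
    rw [sin_pi_div_two]
    field_simp
    ring
  simp only [hend] at hlt
  rw [lt_div_iff₀ (by positivity)] at hlt
  rw [div_lt_iff₀ hx₀]
  linarith

end Real

noncomputable def sincUpperBound (q x : ℝ) : ℝ :=
  2 / π + (π - 2) / π ^ (q + 1) * (π ^ q - (2 * x) ^ q)

lemma sincUpperBound_eq {x : ℝ} (q : ℝ) (hx : 0 ≤ x) :
    sincUpperBound q x = 1 - (1 - 2 / π) * (2 * x / π) ^ q := by
  have hπ := pi_pos
  rw [sincUpperBound, rpow_add hπ, rpow_one, div_rpow (by positivity) hπ.le]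
  field_simp
  ring

lemma sincUpperBound_two (x : ℝ) : sincUpperBound 2 x = 1 - 4 * (π - 2) / π ^ 3 * x ^ 2 := by
  have hπ := pi_pos
  rw [sincUpperBound, show (2 : ℝ) + 1 = (3 : ℕ) by norm_num, rpow_natCast,
    show (2 : ℝ) = (2 : ℕ) by norm_num, rpow_natCast, rpow_natCast]
  field_simp
  ring

lemma sincUpperBound_le_sincUpperBound {q r x : ℝ} (hqr : q ≤ r) (hx₀ : 0 < x)
    (hx : x ≤ π / 2) : sincUpperBound q x ≤ sincUpperBound r x := by
  have hπ := pi_pos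
  have ht₁ : 2 * x / π ≤ 1 := by rw [div_le_one hπ]; linarith
  have hpow := rpow_le_rpow_of_exponent_ge (by positivity) ht₁ hqr
  have hcoef : 0 ≤ 1 - 2 / π := by
    rw [sub_nonneg, div_le_one hπ]
    linarith [pi_gt_three]
  rw [sincUpperBound_eq q hx₀.le, sincUpperBound_eq r hx₀.le]
  linarith [mul_le_mul_of_nonneg_left hpow hcoef]

theorem upper_bound_A :
    (∀ q ≥ (2:ℝ), ∀ x ∈ Set.Ioo 0 (π/2),
      Real.sin x / x < 2/π + (π - 2)/π ^ (q+1) * (π ^ q - (2*x) ^ q)) ∧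
    (∀ q ≥ (2:ℝ), ∀ x ∈ Set.Ioo 0 (π/2),
      2/π + (π - 2)/π ^ ((2:ℝ)+1) * (π ^ (2:ℝ) - (2*x) ^ (2:ℝ)) ≤
        2/π + (π - 2)/π ^ (q+1) * (π ^ q - (2*x) ^ q)) := by
  have hmono : ∀ q ≥ (2:ℝ), ∀ x ∈ Ioo 0 (π / 2), sincUpperBound 2 x ≤ sincUpperBound q x :=
    fun q hq x hx ↦ sincUpperBound_le_sincUpperBound hq hx.1 hx.2.le
  refine ⟨fun q hq x hx ↦ ?_, hmono⟩
  calc sin x / x < sincUpperBound 2 x := by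
        rw [sincUpperBound_two]
        exact sin_div_lt_one_sub_mul_sq hx.1 hx.2
    _ ≤ sincUpperBound q x := hmono q hq x hx
end

section
/- For all q in (0, π²/4 − 1] and all x in (0, π/2), it holds that sin(x)/x < 2/π + (2/(q·π^{q+1}))(π^q − (2x)^q); moreover the constant π²/4 − 1 is the largest q for which this upper bound holds on all of (0, π/2). -/
open Real
open Set

noncomputable def pA : ℝ := π^2/4
noncomputable def GG (x : ℝ) : ℝ := (2*pA/π)*x - (2*x/π)^pA - (pA-1)*Real.sin x
noncomputable def GG1 (x : ℝ) : ℝ := 2*pA/π - (2*pA/π)*(2*x/π)^(pA-1) - (pA-1)*Real.cos x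
noncomputable def GG2 (x : ℝ) : ℝ := (pA-1)*(Real.sin x - (2*x/π)^(pA-2))
noncomputable def PSI (x : ℝ) : ℝ := Real.log (Real.sin x) - (pA-2)*Real.log (2*x/π)
noncomputable def PSI1 (x : ℝ) : ℝ := Real.cos x / Real.sin x - (pA-2)/x
noncomputable def PSI2 (x : ℝ) : ℝ := -((1:ℝ)/(Real.sin x)^2) + (pA-2)/x^2

lemma pA_gt : 2.467 < pA := by
  have h := Real.pi_gt_d6; unfold pA; nlinarith
lemma pA_lt : pA < 2.468 := by
  have h := Real.pi_lt_d6; have h2 := Real.pi_gt_d6; unfold pA; nlinarith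

lemma hasDerivAt_base (x : ℝ) : HasDerivAt (fun y : ℝ => 2*y/π) (2/π) x := by
  simpa using ((hasDerivAt_id x).const_mul 2).div_const π

lemma hG1 (x : ℝ) (hx : 0 < x) : HasDerivAt GG (GG1 x) x := by
  have hb : 2*x/π ≠ 0 := by positivity
  have h1 : HasDerivAt (fun y : ℝ => (2*pA/π)*y) (2*pA/π) x := by
    simpa using (hasDerivAt_id x).const_mul (2*pA/π)
  have h2 : HasDerivAt (fun y : ℝ => (2*y/π)^pA) ((2/π) * pA * (2*x/π)^(pA-1)) x :=
    (hasDerivAt_base x).rpow_const (Or.inl hb)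
  have h3 : HasDerivAt (fun y : ℝ => (pA-1)*Real.sin y) ((pA-1)*Real.cos x) x :=
    (Real.hasDerivAt_sin x).const_mul (pA-1)
  have := (h1.sub h2).sub h3
  refine this.congr_deriv (Eq.symm ?_)
  unfold GG1; ring

lemma hG2 (x : ℝ) (hx : 0 < x) : HasDerivAt GG1 (GG2 x) x := by
  have hb : 2*x/π ≠ 0 := by positivity
  have h2 : HasDerivAt (fun y : ℝ => (2*pA/π)*(2*y/π)^(pA-1))
      ((2*pA/π)*((2/π) * (pA-1) * (2*x/π)^(pA-1-1))) x :=
    ((hasDerivAt_base x).rpow_const (Or.inl hb)).const_mul (2*pA/π)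
  have h3 : HasDerivAt (fun y : ℝ => (pA-1)*Real.cos y) ((pA-1)*(-Real.sin x)) x :=
    (Real.hasDerivAt_cos x).const_mul (pA-1)
  have := ((hasDerivAt_const x (2*pA/π)).sub h2).sub h3
  refine this.congr_deriv (Eq.symm ?_)
  have hpi := Real.pi_ne_zero
  have : pA - 1 - 1 = pA - 2 := by ring
  rw [this]
  unfold GG2 pA
  field_simp
  ring

lemma hP1 (x : ℝ) (hx : 0 < x) (hx2 : x < π) : HasDerivAt PSI (PSI1 x) x := by
  have hs : Real.sin x ≠ 0 := (Real.sin_pos_of_pos_of_lt_pi hx hx2).ne'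
  have hb : 2*x/π ≠ 0 := by positivity
  have h1 : HasDerivAt (fun y : ℝ => Real.log (Real.sin y)) (Real.cos x / Real.sin x) x :=
    (Real.hasDerivAt_sin x).log hs
  have h2 : HasDerivAt (fun y : ℝ => (pA-2)*Real.log (2*y/π)) ((pA-2)*((2/π)/(2*x/π))) x :=
    ((hasDerivAt_base x).log hb).const_mul (pA-2)
  refine (h1.sub h2).congr_deriv (Eq.symm ?_)
  unfold PSI1
  have hpi := Real.pi_ne_zero
  field_simp

lemma hP2 (x : ℝ) (hx : 0 < x) (hx2 : x < π) : HasDerivAt PSI1 (PSI2 x) x := by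
  have hs : Real.sin x ≠ 0 := (Real.sin_pos_of_pos_of_lt_pi hx hx2).ne'
  have h1 : HasDerivAt (fun y : ℝ => Real.cos y / Real.sin y)
      ((-Real.sin x * Real.sin x - Real.cos x * Real.cos x) / (Real.sin x)^2) x :=
    (Real.hasDerivAt_cos x).div (Real.hasDerivAt_sin x) hs
  have h2 : HasDerivAt (fun y : ℝ => (pA-2)/y) ((pA-2) * (-1/x^2)) x := by
    simpa [div_eq_mul_inv] using ((hasDerivAt_id x).inv hx.ne').const_mul (pA-2)
  refine (h1.sub h2).congr_deriv (Eq.symm ?_)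
  unfold PSI2
  have hpyth := Real.sin_sq_add_cos_sq x
  have hx2 : x^2 ≠ 0 := by positivity
  field_simp
  nlinarith [sq_nonneg (Real.sin x), sq_nonneg (Real.cos x)]

lemma PSI2_neg (x : ℝ) (hx : 0 < x) (hx2 : x < π) : PSI2 x < 0 := by
  have hs : 0 < Real.sin x := Real.sin_pos_of_pos_of_lt_pi hx hx2
  have hsx : Real.sin x < x := Real.sin_lt hx
  have h1 : (Real.sin x)^2 < x^2 := by nlinarith
  have h2 : (pA - 2) < 1 := by have := pA_lt; linarith
  have h3 : (pA-2)/x^2 < 1/(Real.sin x)^2 := by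
    rw [div_lt_div_iff₀ (by positivity) (by positivity)]
    nlinarith [pA_gt]
  unfold PSI2; linarith

lemma quarter_rpow : ((1/4 : ℝ)) ^ ((1/2 : ℝ)) = 1/2 := by
  rw [show ((1/4:ℝ)) = ((1/2:ℝ))^(2:ℕ) by norm_num, ← Real.rpow_natCast ((1/2:ℝ)) 2,
    ← Real.rpow_mul (by norm_num)]
  norm_num

lemma small_neg' (x : ℝ) (hx : 0 < x) (hx8 : x ≤ π/8) : Real.sin x - (2*x/π)^(pA-2) < 0 := by
  have hpi := Real.pi_pos
  set u := 2*x/π with hu_def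
  have hu : 0 < u := by positivity
  have hu4 : u ≤ 1/4 := by
    rw [hu_def, div_le_div_iff₀ hpi (by norm_num)]
    linarith
  have h1 : u^(3-pA) ≤ u^((1/2:ℝ)) :=
    Real.rpow_le_rpow_of_exponent_ge hu (by linarith) (by have := pA_lt; linarith)
  have h2 : u^((1/2:ℝ)) ≤ ((1/4:ℝ))^((1/2:ℝ)) := Real.rpow_le_rpow hu.le hu4 (by norm_num)
  have h3 : u^(3-pA) ≤ 1/2 := by rw [quarter_rpow] at h2; linarith
  have hid : u^(pA-2) * u^(3-pA) = u := by
    rw [← Real.rpow_add hu]; norm_num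
  have hup : 0 < u^(3-pA) := Real.rpow_pos_of_pos hu _
  have hx_eq : x = π*u/2 := by rw [hu_def]; field_simp
  have hkey : x < u^(pA-2) := by
    have h5 : u^(pA-2) = u / u^(3-pA) := by
      rw [eq_div_iff hup.ne']; exact hid
    have h6 : u / (1/2 : ℝ) ≤ u / u^(3-pA) :=
      div_le_div_of_nonneg_left hu.le hup h3
    rw [h5, hx_eq]
    have hpi4 : π < 4 := by have := Real.pi_lt_d2; linarith
    have : π*u/2 < u / (1/2:ℝ) := by
      rw [div_lt_div_iff₀ (by norm_num) (by norm_num)]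
      nlinarith
    linarith
  have := Real.sin_lt hx
  linarith

lemma wit : (2*(π/3)/π)^(pA-2) ≤ Real.sin (π/3) := by
  have hpi := Real.pi_ne_zero
  rw [show 2*(π/3)/π = 2/3 by field_simp, Real.sin_pi_div_three]
  have h1 : (2/3:ℝ)^(pA-2) ≤ (2/3:ℝ)^((0.46:ℝ)) :=
    Real.rpow_le_rpow_of_exponent_ge (by norm_num) (by norm_num)
      (by have := pA_gt; norm_num; linarith)
  have h2 : (2/3:ℝ)^((0.46:ℝ)) < Real.sqrt 3 / 2 := by
    apply lt_of_pow_lt_pow_left₀ 50 (by positivity)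
    have hL : ((2/3:ℝ)^((0.46:ℝ)))^(50:ℕ) = (2/3:ℝ)^(23:ℕ) := by
      rw [← Real.rpow_natCast ((2/3:ℝ)^((0.46:ℝ))) 50, ← Real.rpow_mul (by norm_num),
        ← Real.rpow_natCast ((2/3:ℝ)) 23]
      norm_num
    have hR : (Real.sqrt 3 / 2)^(50:ℕ) = 3^(25:ℕ)/2^(50:ℕ) := by
      rw [div_pow, show (50:ℕ) = 2*25 by norm_num, pow_mul, Real.sq_sqrt (by norm_num : (0:ℝ) ≤ 3)]
    rw [hL, hR]
    norm_num
  linarith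

lemma two_half_pi : 2*(π/2)/π = 1 := by
  have := Real.pi_ne_zero; field_simp

lemma GG_pi2 : GG (π/2) = 0 := by
  unfold GG
  rw [two_half_pi, Real.one_rpow, Real.sin_pi_div_two]
  have := Real.pi_ne_zero; field_simp; ring

lemma GG1_pi2 : GG1 (π/2) = 0 := by
  unfold GG1
  rw [two_half_pi, Real.one_rpow, Real.cos_pi_div_two]
  ring

lemma GG_zero : GG 0 = 0 := by
  unfold GG
  have : 2*(0:ℝ)/π = 0 := by simp
  rw [this, Real.zero_rpow (ne_of_gt (by have := pA_gt; linarith : (0:ℝ) < pA)), Real.sin_zero]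
  ring

lemma PSI_pi2 : PSI (π/2) = 0 := by
  unfold PSI
  rw [two_half_pi, Real.sin_pi_div_two, Real.log_one]
  ring

lemma sign_split : ∃ u₀, π/8 ≤ u₀ ∧ u₀ ≤ π/3 ∧
    (∀ x ∈ Ioo (0:ℝ) u₀, Real.sin x - (2*x/π)^(pA-2) ≤ 0) ∧
    (∀ x ∈ Ioo u₀ (π/2), 0 < Real.sin x - (2*x/π)^(pA-2)) := by
  have hpi := Real.pi_pos
  have hpA2 : (0:ℝ) ≤ pA - 2 := by have := pA_gt; linarith
  have hcont : Continuous (fun x:ℝ => Real.sin x - (2*x/π)^(pA-2)) := by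
    apply Real.continuous_sin.sub
    have hc2 : Continuous fun x:ℝ => 2*x/π := by continuity
    exact continuous_iff_continuousAt.2 fun x =>
      (Real.continuousAt_rpow_const _ _ (Or.inr hpA2)).comp hc2.continuousAt
  set S : Set ℝ := Icc (π/8) (π/3) ∩ {x | 0 ≤ Real.sin x - (2*x/π)^(pA-2)} with hS_def
  have hS_closed : IsClosed S := isClosed_Icc.inter (isClosed_le continuous_const hcont)
  have hmem : π/3 ∈ S := by
    constructor
    · constructor <;> [linarith; linarith]
    · simp only [mem_setOf_eq, sub_nonneg]; exact wit
  have hS_bdd : BddBelow S := ⟨π/8, fun x hx => hx.1.1⟩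
  set u₀ := sInf S with hu0_def
  have hu₀S : u₀ ∈ S := hS_closed.csInf_mem ⟨_, hmem⟩ hS_bdd
  have h8 : π/8 ≤ u₀ := hu₀S.1.1
  have h3 : u₀ ≤ π/3 := hu₀S.1.2
  have hu₀pos : 0 < u₀ := by linarith
  have hu₀lt : u₀ < π/2 := by linarith
  refine ⟨u₀, h8, h3, ?_, ?_⟩
  · -- negative part
    intro x hx
    rcases le_or_gt x (π/8) with h|h
    · exact (small_neg' x hx.1 h).le
    · by_contra hc
      push_neg at hc
      have hxS : x ∈ S := ⟨⟨h.le, (hx.2.trans_le h3).le⟩, hc.le⟩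
      exact absurd (csInf_le hS_bdd hxS) (not_le.2 hx.2)
  · -- positive part, via strict concavity of PSI
    have hIcc_sub : ∀ y ∈ Icc u₀ (π/2), 0 < y ∧ y < π := fun y hy =>
      ⟨lt_of_lt_of_le hu₀pos hy.1, lt_of_le_of_lt hy.2 (by linarith)⟩
    have hPSIcont : ContinuousOn PSI (Icc u₀ (π/2)) := fun y hy =>
      ((hP1 y (hIcc_sub y hy).1 (hIcc_sub y hy).2).continuousAt).continuousWithinAt
    have SC : StrictConcaveOn ℝ (Icc u₀ (π/2)) PSI := by
      apply strictConcaveOn_of_deriv2_neg (convex_Icc _ _) hPSIcont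
      intro x hx
      rw [interior_Icc] at hx
      have hx' : 0 < x ∧ x < π := ⟨hu₀pos.trans hx.1, hx.2.trans (by linarith)⟩
      have hEq : deriv PSI =ᶠ[nhds x] PSI1 := by
        filter_upwards [isOpen_Ioo.mem_nhds (show x ∈ Ioo 0 π from ⟨hx'.1, hx'.2⟩)] with y hy
        exact (hP1 y hy.1 hy.2).deriv
      show deriv (deriv PSI) x < 0
      rw [hEq.deriv_eq, (hP2 x hx'.1 hx'.2).deriv]
      exact PSI2_neg x hx'.1 hx'.2
    have hPSIu₀ : 0 ≤ PSI u₀ := by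
      have hb : 0 < 2*u₀/π := by positivity
      have hle : (2*u₀/π)^(pA-2) ≤ Real.sin u₀ := by
        have := hu₀S.2; simpa [sub_nonneg] using this
      have hrp : 0 < (2*u₀/π)^(pA-2) := Real.rpow_pos_of_pos hb _
      have hsin : 0 < Real.sin u₀ := Real.sin_pos_of_pos_of_lt_pi hu₀pos (by linarith)
      have hlog := (Real.log_le_log_iff hrp hsin).2 hle
      rw [Real.log_rpow hb] at hlog
      unfold PSI; linarith
    intro x hx
    have hx0 : 0 < x := hu₀pos.trans hx.1
    have hxpi : x < π := hx.2.trans (by linarith)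
    have hsinx : 0 < Real.sin x := Real.sin_pos_of_pos_of_lt_pi hx0 hxpi
    have hbx : 0 < 2*x/π := by positivity
    have hPSIx : 0 < PSI x := by
      have hden : 0 < π/2 - u₀ := by linarith
      set a := (π/2 - x)/(π/2 - u₀) with ha_def
      set b := (x - u₀)/(π/2 - u₀) with hb_def
      have ha : 0 < a := by apply div_pos; linarith [hx.2]; exact hden
      have hb : 0 < b := by apply div_pos; linarith [hx.1]; exact hden
      have hab : a + b = 1 := by
        rw [ha_def, hb_def, ← add_div, div_eq_one_iff_eq hden.ne']; ring
      have hcomb : a • u₀ + b • (π/2) = x := by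
        rw [smul_eq_mul, smul_eq_mul, ha_def, hb_def, div_mul_eq_mul_div, div_mul_eq_mul_div,
          ← add_div, div_eq_iff hden.ne']; ring
      have := SC.2 (left_mem_Icc.2 hu₀lt.le) (right_mem_Icc.2 hu₀lt.le)
        (ne_of_lt hu₀lt) ha hb hab
      rw [hcomb] at this
      rw [PSI_pi2] at this
      simp only [smul_eq_mul, mul_zero, add_zero] at this
      nlinarith
    have : Real.log ((2*x/π)^(pA-2)) < Real.log (Real.sin x) := by
      rw [Real.log_rpow hbx]; unfold PSI at hPSIx; linarith
    have := (Real.log_lt_log_iff (Real.rpow_pos_of_pos hbx _) hsinx).1 this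
    linarith

lemma GG_pos : ∀ x ∈ Ioo (0:ℝ) (π/2), 0 < GG x := by
  obtain ⟨u₀, h8, h3, hneg, hpos⟩ := sign_split
  have hπ := Real.pi_pos
  have hu₀pos : 0 < u₀ := by linarith
  have hu₀lt : u₀ < π/2 := by linarith
  have hq : (0:ℝ) < pA - 1 := by have := pA_gt; linarith
  have SM : StrictMonoOn GG1 (Icc u₀ (π/2)) := by
    apply strictMonoOn_of_deriv_pos (convex_Icc _ _)
    · exact fun y hy => (hG2 y (hu₀pos.trans_le hy.1)).continuousAt.continuousWithinAt
    · intro x hx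
      rw [interior_Icc] at hx
      rw [(hG2 x (hu₀pos.trans hx.1)).deriv]
      exact mul_pos hq (hpos x hx)
  have hG1neg : ∀ x ∈ Ico u₀ (π/2), GG1 x < 0 := by
    intro x hx
    have := SM ⟨hx.1, hx.2.le⟩ (right_mem_Icc.2 (by linarith)) hx.2
    rwa [GG1_pi2] at this
  have SA : StrictAntiOn GG (Icc u₀ (π/2)) := by
    apply strictAntiOn_of_deriv_neg (convex_Icc _ _)
    · exact fun y hy => (hG1 y (hu₀pos.trans_le hy.1)).continuousAt.continuousWithinAt
    · intro x hx
      rw [interior_Icc] at hx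
      rw [(hG1 x (hu₀pos.trans hx.1)).deriv]
      exact hG1neg x ⟨hx.1.le, hx.2⟩
  have hGud : ∀ x ∈ Ico u₀ (π/2), 0 < GG x := by
    intro x hx
    have := SA ⟨hx.1, hx.2.le⟩ (right_mem_Icc.2 (by linarith)) hx.2
    rwa [GG_pi2] at this
  have hGcont : Continuous GG := by
    unfold GG
    have hpA2 : (0:ℝ) ≤ pA := by have := pA_gt; linarith
    have hc2 : Continuous fun x:ℝ => 2*x/π := by continuity
    have hrc : Continuous fun x:ℝ => (2*x/π)^pA := continuous_iff_continuousAt.2 fun x =>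
      (Real.continuousAt_rpow_const _ _ (Or.inr hpA2)).comp hc2.continuousAt
    fun_prop
  have CC : ConcaveOn ℝ (Icc 0 u₀) GG := by
    apply concaveOn_of_hasDerivWithinAt2_nonpos (f' := GG1) (f'' := GG2) (convex_Icc _ _)
      hGcont.continuousOn
    · intro x hx; rw [interior_Icc] at hx ⊢; exact (hG1 x hx.1).hasDerivWithinAt
    · intro x hx; rw [interior_Icc] at hx ⊢; exact (hG2 x hx.1).hasDerivWithinAt
    · intro x hx; rw [interior_Icc] at hx
      exact mul_nonpos_of_nonneg_of_nonpos hq.le (hneg x hx)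
  intro x hx
  rcases lt_or_ge x u₀ with h|h
  · have hGu₀ : 0 < GG u₀ := hGud u₀ ⟨le_refl _, hu₀lt⟩
    have hx0 := hx.1
    have hb0 : (0:ℝ) ≤ 1 - x/u₀ := by
      rw [sub_nonneg, div_le_one hu₀pos]; exact h.le
    have hb1 : (0:ℝ) ≤ x/u₀ := by positivity
    have := CC.2 (left_mem_Icc.2 hu₀pos.le) (right_mem_Icc.2 hu₀pos.le) hb0 hb1 (by ring)
    simp only [smul_eq_mul, GG_zero, mul_zero, zero_add] at this
    rw [div_mul_cancel₀ _ hu₀pos.ne'] at this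
    have hxd : 0 < x/u₀ := div_pos hx.1 hu₀pos
    nlinarith
  · exact hGud x ⟨h, hx.2⟩

lemma key_q1 (x : ℝ) (hx : x ∈ Ioo (0:ℝ) (π/2)) :
    Real.sin x / x < 2/π * (1 + (1 - (2*x/π)^(pA-1))/(pA-1)) := by
  have hπ := Real.pi_pos
  have hq : (0:ℝ) < pA - 1 := by have := pA_gt; linarith
  have hx0 := hx.1
  have hb : 0 < 2*x/π := by positivity
  have hsplit : (2*x/π)^pA = (2*x/π) * (2*x/π)^(pA-1) := by
    rw [show pA = 1 + (pA-1) by ring, Real.rpow_add hb, Real.rpow_one]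
    ring_nf
  have hG := GG_pos x hx
  unfold GG at hG
  rw [hsplit] at hG
  rw [div_lt_iff₀ hx.1]
  have expand : (pA-1) * (2/π * (1 + (1 - (2*x/π)^(pA-1))/(pA-1)) * x)
      = (2*pA/π)*x - (2*x/π) * (2*x/π)^(pA-1) := by
    field_simp
    ring
  have hlt : (pA-1) * Real.sin x < (pA-1) * (2/π * (1 + (1 - (2*x/π)^(pA-1))/(pA-1)) * x) := by
    rw [expand]; linarith [hG]
  exact (mul_lt_mul_iff_right₀ hq).1 hlt

lemma rhs_eq (q x : ℝ) (hq : 0 < q) (hx : 0 < x) :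
    2/π + 2/(q*π^(q+1)) * (π^q - (2*x)^q) = 2/π * (1 + (1 - (2*x/π)^q)/q) := by
  have hπ := Real.pi_pos
  have h1 : π^(q+1) = π^q * π := by rw [Real.rpow_add hπ, Real.rpow_one]
  have h2 : (2*x/π)^q = (2*x)^q / π^q := Real.div_rpow (by positivity) hπ.le q
  have hπq : 0 < π^q := Real.rpow_pos_of_pos hπ q
  rw [h1, h2]
  field_simp

lemma mono_q (q u : ℝ) (hq0 : 0 < q) (hq1 : q ≤ π^2/4 - 1) (hu0 : 0 < u) (hu1 : u < 1) :
    (1 - u^(pA-1))/(pA-1) ≤ (1 - u^q)/q := by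
  have hq₁ : (0:ℝ) < pA - 1 := by have := pA_gt; linarith
  have hqle : q ≤ pA - 1 := by unfold pA; linarith
  have hs : 1 ≤ (pA-1)/q := (one_le_div hq0).2 hqle
  have hv : 0 < u^q := Real.rpow_pos_of_pos hu0 q
  have hv1 : u^q ≤ 1 := Real.rpow_le_one hu0.le hu1.le hq0.le
  have hbern := one_add_mul_self_le_rpow_one_add (by linarith : (-1:ℝ) ≤ u^q - 1) hs
  rw [show (1:ℝ) + (u^q - 1) = u^q by ring] at hbern
  have hpow : (u^q)^((pA-1)/q) = u^(pA-1) := by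
    rw [← Real.rpow_mul hu0.le, show q*((pA-1)/q) = pA - 1 by field_simp]
  rw [hpow] at hbern
  have h' : 1 - u^(pA-1) ≤ (pA-1)/q*(1 - u^q) := by
    have : ((pA-1)/q)*(1-u^q) = -(((pA-1)/q)*(u^q-1)) := by ring
    linarith
  rw [div_le_div_iff₀ hq₁ hq0]
  calc (1-u^(pA-1))*q ≤ ((pA-1)/q*(1-u^q))*q := mul_le_mul_of_nonneg_right h' hq0.le
    _ = (1-u^q)*(pA-1) := by field_simp

lemma part1 (q : ℝ) (hq : q ∈ Ioc (0:ℝ) (π^2/4-1)) (x : ℝ) (hx : x ∈ Ioo (0:ℝ) (π/2)) :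
    Real.sin x / x < 2/π + 2/(q*π^(q+1)) * (π^q - (2*x)^q) := by
  have hπ := Real.pi_pos
  have hx0 := hx.1
  have hu0 : 0 < 2*x/π := by positivity
  have hu1 : 2*x/π < 1 := by rw [div_lt_one hπ]; linarith [hx.2]
  rw [rhs_eq q x hq.1 hx.1]
  have h1 := key_q1 x hx
  have h2 := mono_q q (2*x/π) hq.1 hq.2 hu0 hu1
  have h2π : (0:ℝ) < 2/π := by positivity
  calc Real.sin x / x < 2/π * (1 + (1 - (2*x/π)^(pA-1))/(pA-1)) := h1
    _ ≤ 2/π * (1 + (1 - (2*x/π)^q)/q) := by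
        apply mul_le_mul_of_nonneg_left (by linarith) h2π.le

noncomputable def DD (q x : ℝ) : ℝ := Real.sin x / x - (2/π + 2/(q*π^(q+1)) * (π^q - (2*x)^q))
noncomputable def DD1 (q x : ℝ) : ℝ :=
  (Real.cos x * x - Real.sin x)/x^2 + 2/(q*π^(q+1)) * (2*q*(2*x)^(q-1))
noncomputable def DD2 (q x : ℝ) : ℝ :=
  (-(x^2*Real.sin x) - 2*x*Real.cos x + 2*Real.sin x)/x^3
    + 2/(q*π^(q+1)) * (4*q*(q-1)*(2*x)^(q-2))

lemma hD1 (q x : ℝ) (hx : 0 < x) : HasDerivAt (DD q) (DD1 q x) x := by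
  have h2x : (2*x : ℝ) ≠ 0 := by positivity
  have h1 : HasDerivAt (fun y : ℝ => Real.sin y / y)
      ((Real.cos x * x - Real.sin x * 1)/x^2) x :=
    (Real.hasDerivAt_sin x).div (hasDerivAt_id x) hx.ne'
  have hlin : HasDerivAt (fun y : ℝ => 2*y) 2 x := by
    simpa using (hasDerivAt_id x).const_mul 2
  have h2 : HasDerivAt (fun y : ℝ => (2*y)^q) ((2:ℝ) * q * (2*x)^(q-1)) x :=
    hlin.rpow_const (Or.inl h2x)
  have h3 : HasDerivAt (fun y : ℝ => 2/π + 2/(q*π^(q+1)) * (π^q - (2*y)^q))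
      (2/(q*π^(q+1)) * (0 - (2:ℝ) * q * (2*x)^(q-1))) x :=
    (((hasDerivAt_const x (π^q)).sub h2).const_mul _).const_add (2/π)
  refine (h1.sub h3).congr_deriv (Eq.symm ?_)
  unfold DD1; ring

lemma hD2 (q x : ℝ) (hx : 0 < x) : HasDerivAt (DD1 q) (DD2 q x) x := by
  have h2x : (2*x : ℝ) ≠ 0 := by positivity
  have hnum : HasDerivAt (fun y : ℝ => Real.cos y * y - Real.sin y)
      ((-Real.sin x) * x + Real.cos x * 1 - Real.cos x) x :=
    ((Real.hasDerivAt_cos x).mul (hasDerivAt_id x)).sub (Real.hasDerivAt_sin x)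
  have hden : HasDerivAt (fun y : ℝ => y^2) (2*x^1*1) x := by
    simpa using (hasDerivAt_pow 2 x)
  have h1 : HasDerivAt (fun y : ℝ => (Real.cos y * y - Real.sin y)/y^2)
      ((((-Real.sin x) * x + Real.cos x * 1 - Real.cos x) * x^2
        - (Real.cos x * x - Real.sin x) * (2*x^1*1))/(x^2)^2) x :=
    hnum.div hden (by positivity)
  have hlin : HasDerivAt (fun y : ℝ => 2*y) 2 x := by
    simpa using (hasDerivAt_id x).const_mul 2
  have h2 : HasDerivAt (fun y : ℝ => (2*y)^(q-1)) ((2:ℝ) * (q-1) * (2*x)^(q-1-1)) x :=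
    hlin.rpow_const (Or.inl h2x)
  have h3 : HasDerivAt (fun y : ℝ => 2/(q*π^(q+1)) * (2*q*(2*y)^(q-1)))
      (2/(q*π^(q+1)) * (2*q*((2:ℝ) * (q-1) * (2*x)^(q-1-1)))) x := by
    exact ((h2.const_mul (2*q)).const_mul _)
  refine (h1.add h3).congr_deriv (Eq.symm ?_)
  unfold DD2
  have hx2 : x ≠ 0 := hx.ne'
  rw [show q-1-1 = q-2 by ring]
  field_simp
  ring

lemma Dpi (q : ℝ) : DD q (π/2) = 0 := by
  have hπ := Real.pi_pos
  unfold DD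
  rw [show 2*(π/2) = π by ring, Real.sin_pi_div_two, sub_self, mul_zero, add_zero]
  field_simp
  ring

lemma D1pi (q : ℝ) (hq : 0 < q) : DD1 q (π/2) = 0 := by
  have hπ := Real.pi_pos
  unfold DD1
  rw [show 2*(π/2) = π by ring, Real.sin_pi_div_two, Real.cos_pi_div_two,
    show q+1 = (q-1)+2 by ring, Real.rpow_add hπ,
    show ((2:ℝ)) = ((2:ℕ):ℝ) by norm_num, Real.rpow_natCast]
  have h1 : (0:ℝ) < π^(q-1) := Real.rpow_pos_of_pos hπ _
  field_simp
  ring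

lemma D2pi (q : ℝ) (hq : 0 < q) : DD2 q (π/2) = (8*q + 8 - 2*π^2)/π^3 := by
  have hπ := Real.pi_pos
  unfold DD2
  rw [show 2*(π/2) = π by ring, Real.sin_pi_div_two, Real.cos_pi_div_two,
    show q+1 = (q-2)+3 by ring, Real.rpow_add hπ,
    show ((3:ℝ)) = ((3:ℕ):ℝ) by norm_num, Real.rpow_natCast]
  have h1 : (0:ℝ) < π^(q-2) := Real.rpow_pos_of_pos hπ _
  field_simp
  ring

lemma part2 (q : ℝ) (hq : π^2/4 - 1 < q) : ∃ x ∈ Ioo (0:ℝ) (π/2),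
    ¬ (Real.sin x / x < 2/π + 2/(q*π^(q+1)) * (π^q - (2*x)^q)) := by
  have hπ := Real.pi_pos
  have hπ3 : 3 < π := by have := Real.pi_gt_d6; linarith
  have hq0 : 0 < q := by nlinarith
  have hD2pos : 0 < DD2 q (π/2) := by
    rw [D2pi q hq0]
    apply div_pos (by nlinarith) (by positivity)
  have hcont : ContinuousAt (DD2 q) (π/2) := by
    have c1 : ContinuousAt (fun x:ℝ =>
        (-(x^2*Real.sin x) - 2*x*Real.cos x + 2*Real.sin x)/x^3) (π/2) :=
      ContinuousAt.div (by fun_prop) (by fun_prop) (by positivity)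
    have c2 : ContinuousAt (fun x:ℝ => (2*x)^(q-2)) (π/2) := by
      have hne : (2*(π/2) : ℝ) ≠ 0 := by positivity
      exact (Real.continuousAt_rpow_const _ _ (Or.inl hne)).comp (by fun_prop)
    exact c1.add (continuousAt_const.mul (continuousAt_const.mul c2))
  have hev : ∀ᶠ x in nhds (π/2), 0 < DD2 q x := hcont.eventually (eventually_gt_nhds hD2pos)
  obtain ⟨δ, hδpos, hδ⟩ := Metric.eventually_nhds_iff.mp hev
  set a : ℝ := max 1 (π/2 - δ/2) with ha_def
  have ha1 : (1:ℝ) ≤ a := le_max_left _ _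
  have hapos : 0 < a := by linarith
  have halt : a < π/2 := by
    apply max_lt (by linarith) (by linarith)
  have hin : ∀ y ∈ Icc a (π/2), 0 < DD2 q y := by
    intro y hy
    apply hδ
    rw [Real.dist_eq, abs_of_nonpos (by linarith [hy.2])]
    have : π/2 - δ/2 ≤ a := le_max_right _ _
    have := hy.1
    linarith
  have SM1 : StrictMonoOn (DD1 q) (Icc a (π/2)) := by
    apply strictMonoOn_of_deriv_pos (convex_Icc _ _)
    · exact fun y hy => (hD2 q y (lt_of_lt_of_le hapos hy.1)).continuousAt.continuousWithinAt
    · intro x hx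
      rw [interior_Icc] at hx
      rw [(hD2 q x (hapos.trans hx.1)).deriv]
      exact hin x ⟨hx.1.le, hx.2.le⟩
  have hD1neg : ∀ x ∈ Ico a (π/2), DD1 q x < 0 := by
    intro x hx
    have := SM1 ⟨hx.1, hx.2.le⟩ (right_mem_Icc.2 halt.le) hx.2
    rwa [D1pi q hq0] at this
  have SA1 : StrictAntiOn (DD q) (Icc a (π/2)) := by
    apply strictAntiOn_of_deriv_neg (convex_Icc _ _)
    · exact fun y hy => (hD1 q y (lt_of_lt_of_le hapos hy.1)).continuousAt.continuousWithinAt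
    · intro x hx
      rw [interior_Icc] at hx
      rw [(hD1 q x (hapos.trans hx.1)).deriv]
      exact hD1neg x ⟨hx.1.le, hx.2⟩
  set x₀ := (a + π/2)/2 with hx₀_def
  have hx₀a : a < x₀ := by rw [hx₀_def]; linarith
  have hx₀lt : x₀ < π/2 := by rw [hx₀_def]; linarith
  have hpos : 0 < DD q x₀ := by
    have := SA1 ⟨hx₀a.le, hx₀lt.le⟩ (right_mem_Icc.2 halt.le) hx₀lt
    rwa [Dpi q] at this
  refine ⟨x₀, ⟨by linarith, hx₀lt⟩, ?_⟩
  intro hcon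
  unfold DD at hpos
  linarith


theorem upper_bound_B :
    (∀ q ∈ Set.Ioc (0:ℝ) (π^2/4 - 1), ∀ x ∈ Set.Ioo 0 (π/2),
      Real.sin x / x < 2/π + 2/(q*π ^ (q+1)) * (π ^ q - (2*x) ^ q)) ∧
    (∀ q > π^2/4 - 1, ∃ x ∈ Set.Ioo 0 (π/2),
      ¬ (Real.sin x / x < 2/π + 2/(q*π ^ (q+1)) * (π ^ q - (2*x) ^ q))) := by
  exact ⟨fun q hq x hx => part1 q hq x hx, fun q hq => part2 q hq⟩
end

section
/- For all q ≥ 2/(π−2) and all x in (0, π/2), it holds that sin(x)/x > 2/π + (2/(q·π^{q+1}))(π^q − (2x)^q), and among such q the bound with q = 2/(π−2) is the largest (best) lower bound. -/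
open Real

lemma aux_nonneg {f f' : ℝ → ℝ} (hd : ∀ t, HasDerivAt f (f' t) t)
    (h0 : f 0 = 0) (hf' : ∀ t, 0 ≤ t → 0 ≤ f' t) {x : ℝ} (hx : 0 ≤ x) : 0 ≤ f x := by
  have hm : MonotoneOn f (Set.Ici 0) := by
    refine monotoneOn_of_deriv_nonneg (convex_Ici 0)
      (fun t _ => (hd t).continuousAt.continuousWithinAt)
      (fun t _ => (hd t).differentiableAt.differentiableWithinAt) ?_
    intro t ht
    rw [(hd t).deriv]
    rw [interior_Ici] at ht
    exact hf' t (le_of_lt ht)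
  calc (0:ℝ) = f 0 := h0.symm
  _ ≤ f x := hm Set.self_mem_Ici hx hx

lemma sin_ge_3 {t : ℝ} (ht : 0 ≤ t) : t - t^3/6 ≤ Real.sin t := by
  have h := aux_nonneg (f := fun u => Real.sin u - (u - u^3/6))
      (f' := fun u => Real.cos u - (1 - u^2/2)) ?_ (by norm_num) ?_ ht
  · linarith [h]
  · intro u
    have h2 : HasDerivAt (fun u : ℝ => u - u^3/6) (1 - u^2/2) u := by
      have := (hasDerivAt_id u).fun_sub ((hasDerivAt_pow 3 u).div_const 6)
      exact this.congr_deriv (by push_cast; ring)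
    exact (Real.hasDerivAt_sin u).sub h2
  · intro u _
    have := Real.one_sub_sq_div_two_le_cos (x := u)
    linarith

lemma cos_le_4 {t : ℝ} (ht : 0 ≤ t) : Real.cos t ≤ 1 - t^2/2 + t^4/24 := by
  have h := aux_nonneg (f := fun u => (1 - u^2/2 + u^4/24) - Real.cos u)
      (f' := fun u => Real.sin u - (u - u^3/6)) ?_ (by norm_num) ?_ ht
  · linarith [h]
  · intro u
    have h2 : HasDerivAt (fun u : ℝ => 1 - u^2/2 + u^4/24) (-(u - u^3/6)) u := by
      have := ((hasDerivAt_const u (1:ℝ)).fun_sub ((hasDerivAt_pow 2 u).div_const 2)).fun_add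
        ((hasDerivAt_pow 4 u).div_const 24)
      exact this.congr_deriv (by push_cast; ring)
    have := h2.fun_sub (Real.hasDerivAt_cos u)
    exact this.congr_deriv (by ring)
  · intro u hu
    simpa using sin_ge_3 hu

lemma sin_le_5 {t : ℝ} (ht : 0 ≤ t) : Real.sin t ≤ t - t^3/6 + t^5/120 := by
  have h := aux_nonneg (f := fun u => (u - u^3/6 + u^5/120) - Real.sin u)
      (f' := fun u => (1 - u^2/2 + u^4/24) - Real.cos u) ?_ (by norm_num) ?_ ht
  · linarith [h]
  · intro u
    have h2 : HasDerivAt (fun u : ℝ => u - u^3/6 + u^5/120) (1 - u^2/2 + u^4/24) u := by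
      have := ((hasDerivAt_id u).fun_sub ((hasDerivAt_pow 3 u).div_const 6)).fun_add
        ((hasDerivAt_pow 5 u).div_const 120)
      exact this.congr_deriv (by push_cast; ring)
    exact h2.fun_sub (Real.hasDerivAt_sin u)
  · intro u hu
    simpa using cos_le_4 hu

lemma cos_ge_6 {t : ℝ} (ht : 0 ≤ t) : 1 - t^2/2 + t^4/24 - t^6/720 ≤ Real.cos t := by
  have h := aux_nonneg (f := fun u => Real.cos u - (1 - u^2/2 + u^4/24 - u^6/720))
      (f' := fun u => (u - u^3/6 + u^5/120) - Real.sin u) ?_ (by norm_num) ?_ ht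
  · linarith [h]
  · intro u
    have h2 : HasDerivAt (fun u : ℝ => 1 - u^2/2 + u^4/24 - u^6/720)
        (-(u - u^3/6 + u^5/120)) u := by
      have := (((hasDerivAt_const u (1:ℝ)).fun_sub ((hasDerivAt_pow 2 u).div_const 2)).fun_add
        ((hasDerivAt_pow 4 u).div_const 24)).fun_sub ((hasDerivAt_pow 6 u).div_const 720)
      exact this.congr_deriv (by push_cast; ring)
    have := (Real.hasDerivAt_cos u).sub h2
    exact this.congr_deriv (by ring)
  · intro u hu
    simpa using sin_le_5 hu

lemma sin_ge_7 {t : ℝ} (ht : 0 ≤ t) : t - t^3/6 + t^5/120 - t^7/5040 ≤ Real.sin t := by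
  have h := aux_nonneg (f := fun u => Real.sin u - (u - u^3/6 + u^5/120 - u^7/5040))
      (f' := fun u => Real.cos u - (1 - u^2/2 + u^4/24 - u^6/720)) ?_ (by norm_num) ?_ ht
  · linarith [h]
  · intro u
    have h2 : HasDerivAt (fun u : ℝ => u - u^3/6 + u^5/120 - u^7/5040)
        (1 - u^2/2 + u^4/24 - u^6/720) u := by
      have := (((hasDerivAt_id u).fun_sub ((hasDerivAt_pow 3 u).div_const 6)).fun_add
        ((hasDerivAt_pow 5 u).div_const 120)).fun_sub ((hasDerivAt_pow 7 u).div_const 5040)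
      exact this.congr_deriv (by push_cast; ring)
    exact (Real.hasDerivAt_sin u).sub h2
  · intro u hu
    simpa using cos_ge_6 hu


lemma psi_pos {t : ℝ} (h0 : 0 < t) (h2 : t < π/2) :
    2*t + (π-2)*t*Real.cos t < π*Real.sin t := by
  have hπl : (3.141592:ℝ) < π := Real.pi_gt_d6
  have hπu : π < 3.141593 := Real.pi_lt_d6
  rcases le_or_gt t 1.1 with hA | hB
  · -- small t: Taylor bounds
    have hs := sin_ge_7 h0.le
    have hc := cos_le_4 h0.le
    have ht2 : t^2 ≤ 1.21 := by nlinarith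
    have ht4 : t^4 ≤ 1.4641 := by nlinarith
    have key : (4*π-10)*t^2/120 + π*t^4/5040 < (2*π-6)/6 := by nlinarith
    have h3 : (0:ℝ) < t^3 := by positivity
    nlinarith [mul_lt_mul_of_pos_left key h3, mul_le_mul_of_nonneg_left hc
      (by nlinarith : (0:ℝ) ≤ (π-2)*t)]
  · -- t near π/2
    have hy0 : 0 < π/2 - t := by linarith
    have hy1 : π/2 - t < 0.471 := by nlinarith
    have hsin : Real.sin t = Real.cos (π/2 - t) := (Real.cos_pi_div_two_sub t).symm
    have hcos : Real.cos t = Real.sin (π/2 - t) := (Real.sin_pi_div_two_sub t).symm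
    rw [hsin, hcos]
    have h1 : 1 - (π/2 - t)^2/2 ≤ Real.cos (π/2 - t) := Real.one_sub_sq_div_two_le_cos
    have h2' : Real.sin (π/2 - t) ≤ π/2 - t := Real.sin_le hy0.le
    have hb : 0 < (2 - π*(π-2)/2) - (π/2 - t)*(2 - π/2) := by nlinarith
    have hyb := mul_pos hy0 hb
    have hA := mul_le_mul_of_nonneg_left h1 (by positivity : (0:ℝ) ≤ π)
    have hBd := mul_le_mul_of_nonneg_left h2' (by nlinarith : (0:ℝ) ≤ (π-2)*t)
    nlinarith [hyb, hA, hBd]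


lemma key_s18 {x : ℝ} (hx0 : 0 < x) (hx2 : x < π/2) :
    1 - Real.sin x / x < (π-2)/π * (2*x/π) ^ (2/(π-2)) := by
  have hπ : (0:ℝ) < π := Real.pi_pos
  have hπ2 : (0:ℝ) < π - 2 := by nlinarith [Real.pi_gt_three]
  set q : ℝ := 2/(π-2) with hqdef
  have hq : 0 < q := by positivity
  set F : ℝ → ℝ := fun u => (1 - Real.sin u / u) * u ^ (-q) with hFdef
  have hF : ∀ t : ℝ, 0 < t → HasDerivAt F
      (-((Real.cos t * t - Real.sin t * 1)/t^2) * t ^ (-q)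
        + (1 - Real.sin t/t) * (-q * t ^ (-q-1))) t := by
    intro t ht
    have h1 : HasDerivAt (fun u : ℝ => Real.sin u / u)
        ((Real.cos t * t - Real.sin t * 1)/t^2) t :=
      (Real.hasDerivAt_sin t).div (hasDerivAt_id t) ht.ne'
    have h2 : HasDerivAt (fun u : ℝ => 1 - Real.sin u / u)
        (-((Real.cos t * t - Real.sin t * 1)/t^2)) t := by
      simpa using (hasDerivAt_const t (1:ℝ)).fun_sub h1
    have h3 : HasDerivAt (fun u : ℝ => u ^ (-q)) (-q * t ^ (-q-1)) t := by
      simpa using Real.hasDerivAt_rpow_const (p := -q) (Or.inl ht.ne')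
    simpa [hFdef] using h2.fun_mul h3
  have hmono : StrictMonoOn F (Set.Icc x (π/2)) := by
    apply strictMonoOn_of_deriv_pos (convex_Icc _ _)
    · intro t ht
      exact (hF t (lt_of_lt_of_le hx0 ht.1)).continuousAt.continuousWithinAt
    · intro t ht
      rw [interior_Icc] at ht
      have ht0 : 0 < t := hx0.trans ht.1
      rw [(hF t ht0).deriv]
      have hψ := psi_pos ht0 ht.2
      have hbr : 0 < Real.sin t - t * Real.cos t - q * (t - Real.sin t) := by
        have h' : q * (t - Real.sin t) < Real.sin t - t * Real.cos t := by
          rw [hqdef, div_mul_eq_mul_div, div_lt_iff₀ hπ2]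
          nlinarith [hψ]
        linarith
      have hA : (0:ℝ) < t ^ (-q-1) := Real.rpow_pos_of_pos ht0 _
      have hsplit : t ^ (-q) = t ^ (-q-1) * t := by
        have h := Real.rpow_add_one ht0.ne' (-q-1)
        rw [show (-q-1+1 : ℝ) = -q by ring] at h
        exact h
      rw [hsplit]
      have hEq : -((Real.cos t * t - Real.sin t * 1)/t^2) * (t ^ (-q-1) * t)
          + (1 - Real.sin t/t) * (-q * t ^ (-q-1))
          = (Real.sin t - t * Real.cos t - q * (t - Real.sin t)) / t * t ^ (-q-1) := by
        field_simp
        ring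
      rw [hEq]
      exact mul_pos (div_pos hbr ht0) hA
  have hlt : F x < F (π/2) :=
    hmono (Set.left_mem_Icc.2 hx2.le) (Set.right_mem_Icc.2 hx2.le) hx2
  have hFpi : F (π/2) = (π-2)/π * (π/2) ^ (-q) := by
    simp only [hFdef, Real.sin_pi_div_two]
    congr 1
    field_simp
  have hxq : (0:ℝ) < x ^ q := Real.rpow_pos_of_pos hx0 q
  have hcancel : x ^ (-q) * x ^ q = 1 := by
    rw [← Real.rpow_add hx0]
    simp
  have hmul := mul_lt_mul_of_pos_right (hFpi ▸ hlt) hxq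
  have hL : (1 - Real.sin x / x) * x ^ (-q) * x ^ q = 1 - Real.sin x / x := by
    rw [mul_assoc, hcancel, mul_one]
  have hR : (π-2)/π * (π/2) ^ (-q) * x ^ q = (π-2)/π * (2*x/π) ^ q := by
    rw [mul_assoc]
    congr 1
    have h2xπ : (2*x/π : ℝ) = x * (2/π) := by field_simp
    rw [h2xπ, Real.mul_rpow hx0.le (by positivity),
      show (2/π : ℝ) = (π/2)⁻¹ by field_simp,
      Real.inv_rpow (by positivity), ← Real.rpow_neg (by positivity)]
    ring
  rw [hL, hR] at hmul
  exact hmul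

lemma rewrite_form (q : ℝ) (hq : 0 < q) {x : ℝ} (hx0 : 0 < x) :
    2/(q*π^(q+1)) * (π^q - (2*x)^q) = 2/π * ((1 - (2*x/π)^q)/q) := by
  have hπ : (0:ℝ) < π := Real.pi_pos
  have h1 : ((2*x):ℝ)^q = (2*x/π)^q * π^q := by
    rw [← Real.mul_rpow (by positivity) hπ.le]
    congr 1
    field_simp
  have h2 : π^(q+1) = π^q * π := Real.rpow_add_one hπ.ne' q
  rw [h1, h2]
  have hπq : (0:ℝ) < π^q := Real.rpow_pos_of_pos hπ q
  field_simp

lemma gmono {s p q : ℝ} (hs0 : 0 < s) (hs1 : s < 1) (hp : 0 < p) (hpq : p ≤ q) :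
    (1 - s^q)/q ≤ (1 - s^p)/p := by
  have hq : 0 < q := hp.trans_le hpq
  have hu0 : 0 < s^q := Real.rpow_pos_of_pos hs0 q
  have hsp : s^p = (s^q) ^ (p/q) := by
    rw [← Real.rpow_mul hs0.le]
    congr 1
    field_simp
  have hber : (s^q)^(p/q) ≤ 1 + (p/q)*(s^q - 1) := by
    have h := rpow_one_add_le_one_add_mul_self (s := s^q - 1) (p := p/q) (by linarith)
      (by positivity) (by rw [div_le_one hq]; exact hpq)
    simpa using h
  rw [div_le_div_iff₀ hq hp]
  have h3 : q * s^p ≤ q + p*(s^q - 1) := by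
    rw [hsp]
    calc q * (s^q)^(p/q) ≤ q * (1 + p/q*(s^q-1)) :=
          mul_le_mul_of_nonneg_left hber hq.le
    _ = q + p*(s^q-1) := by field_simp
  nlinarith [h3]

theorem lower_bound_B :
    (∀ q ≥ 2/(π-2), ∀ x ∈ Set.Ioo 0 (π/2),
      Real.sin x / x > 2/π + 2/(q*π ^ (q+1)) * (π ^ q - (2*x) ^ q)) ∧
    (∀ q ≥ 2/(π-2), ∀ x ∈ Set.Ioo 0 (π/2),
      2/π + 2/(q*π ^ (q+1)) * (π ^ q - (2*x) ^ q) ≤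
        2/π + 2/((2/(π-2))*π ^ (2/(π-2)+1)) * (π ^ (2/(π-2)) - (2*x) ^ (2/(π-2)))) := by
  have hπ : (0:ℝ) < π := Real.pi_pos
  have hπ2 : (0:ℝ) < π - 2 := by nlinarith [Real.pi_gt_three]
  have hq0 : (0:ℝ) < 2/(π-2) := by positivity
  constructor
  · intro q hq x hx
    obtain ⟨hx0, hx2⟩ := hx
    have hqpos : 0 < q := lt_of_lt_of_le hq0 hq
    have hs0 : 0 < 2*x/π := by positivity
    have hs1 : 2*x/π < 1 := by rw [div_lt_one hπ]; linarith
    rw [rewrite_form q hqpos hx0]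
    have hg := gmono hs0 hs1 hq0 hq
    have hkey := key_s18 hx0 hx2
    have hmul := mul_le_mul_of_nonneg_left hg (by positivity : (0:ℝ) ≤ 2/π)
    have he : 2/π * ((1 - (2*x/π)^(2/(π-2)))/(2/(π-2)))
        = (π-2)/π * (1 - (2*x/π)^(2/(π-2))) := by
      field_simp
    have hone : 2/π + (π-2)/π * (1 - (2*x/π)^(2/(π-2)))
        = 1 - (π-2)/π * (2*x/π)^(2/(π-2)) := by
      field_simp
      ring
    rw [he] at hmul
    linarith [hmul, hkey, hone]
  · intro q hq x hx
    obtain ⟨hx0, hx2⟩ := hx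
    have hqpos : 0 < q := lt_of_lt_of_le hq0 hq
    have hs0 : 0 < 2*x/π := by positivity
    have hs1 : 2*x/π < 1 := by rw [div_lt_one hπ]; linarith
    rw [rewrite_form q hqpos hx0, rewrite_form (2/(π-2)) hq0 hx0]
    have hg := gmono hs0 hs1 hq0 hq
    have hmul := mul_le_mul_of_nonneg_left hg (by positivity : (0:ℝ) ≤ 2/π)
    linarith [hmul]
end
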